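/- arXiv:2312.17085 — 3 statements merged into one kernel-verified Lean document; each statement's English description precedes it below -/
import Mathlib

section
/- Let ρ̄ ∈ L^1_loc(ℝ^d), let b be a bounded divergence-free vector field, and for each k let X^k be the flow of a smooth bounded divergence-free approximation b^k with ‖b^k‖_∞ ≤ ‖b‖_∞, and set ρ^k(t,·) := ρ̄(X^k(0,t,·)). Then for every n ∈ ℕ, the family {ρ^k} is equi-integrable on [0,n] × [-n,n]^d, hence relatively weakly sequentially compact in L^1([0,n]×[-n,n]^d). -/
open MeasureTheory Real Set Filter Topology

noncomputable section

/-- The time derivative `∂ₜφ` of a test function on `ℝ × ℝᵈ`. -/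
def tDeriv {d : ℕ} (φ : ℝ × (Fin d → ℝ) → ℝ) (p : ℝ × (Fin d → ℝ)) : ℝ :=
  fderiv ℝ φ p (1, 0)

/-- The `i`-th spatial partial derivative of a test function on `ℝ × ℝᵈ`. -/
def xDeriv {d : ℕ} (φ : ℝ × (Fin d → ℝ) → ℝ) (i : Fin d) (p : ℝ × (Fin d → ℝ)) : ℝ :=
  fderiv ℝ φ p (0, Pi.single i 1)

/-- The `i`-th partial derivative of a function on `ℝᵈ`. -/
def pDeriv {d : ℕ} (φ : (Fin d → ℝ) → ℝ) (i : Fin d) (x : Fin d → ℝ) : ℝ :=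
  fderiv ℝ φ x (Pi.single i 1)

/-- A vector field (everywhere) bounded by `M`. -/
def Bounded {d : ℕ} (b : ℝ × (Fin d → ℝ) → Fin d → ℝ) (M : ℝ) : Prop := ∀ p, ‖b p‖ ≤ M

/-- Divergence-free in `x`, in the sense of distributions, for a.e. time. -/
def DivFree {d : ℕ} (b : ℝ × (Fin d → ℝ) → Fin d → ℝ) : Prop :=
  ∀ᵐ t ∂(volume : Measure ℝ), ∀ φ : (Fin d → ℝ) → ℝ, ContDiff ℝ (⊤ : ℕ∞) φ → HasCompactSupport φ →
    ∫ x, ∑ i, b (t, x) i * pDeriv φ i x = 0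

/-- Weak solution of the boundary value problem `∂ₜρ + div_x(bρ) = 0`, `ρ(s,·) = ρ₀`:
for every smooth compactly supported test function `φ`, the integral of
`ρ (∂ₜφ + b·∇ₓφ)` over `{t > s}` equals `-∫ ρ₀ φ(s,·)` and the integral over
`{t < s}` equals `∫ ρ₀ φ(s,·)`. -/
def IsWeakSolBVP {d : ℕ} (b : ℝ × (Fin d → ℝ) → Fin d → ℝ) (ρ : ℝ × (Fin d → ℝ) → ℝ)
    (ρ₀ : (Fin d → ℝ) → ℝ) (s : ℝ) : Prop :=
  ∀ φ : ℝ × (Fin d → ℝ) → ℝ, ContDiff ℝ (⊤ : ℕ∞) φ → HasCompactSupport φ →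
    (∫ p in {p : ℝ × (Fin d → ℝ) | s < p.1},
        ρ p * (tDeriv φ p + ∑ i, b p i * xDeriv φ i p)) = - ∫ x, ρ₀ x * φ (s, x) ∧
    (∫ p in {p : ℝ × (Fin d → ℝ) | p.1 < s},
        ρ p * (tDeriv φ p + ∑ i, b p i * xDeriv φ i p)) = ∫ x, ρ₀ x * φ (s, x)

/-- Weak solution of the initial value problem on `[0,∞)` with datum `ρ₀` at time `0`. -/
def IsWeakSolIVP {d : ℕ} (b : ℝ × (Fin d → ℝ) → Fin d → ℝ) (ρ : ℝ × (Fin d → ℝ) → ℝ)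
    (ρ₀ : (Fin d → ℝ) → ℝ) : Prop :=
  ∀ φ : ℝ × (Fin d → ℝ) → ℝ, ContDiff ℝ (⊤ : ℕ∞) φ → HasCompactSupport φ →
    (∫ p in {p : ℝ × (Fin d → ℝ) | 0 < p.1},
        ρ p * (tDeriv φ p + ∑ i, b p i * xDeriv φ i p)) = - ∫ x, ρ₀ x * φ (0, x)

/-- A bound `C` on the total variation of `u` on the ball of radius `R`, via duality
against vector test functions with sup-norm at most one. -/
def BVlocBound {d : ℕ} (u : (Fin d → ℝ) → Fin d → ℝ) (R C : ℝ) : Prop :=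
  ∀ φ : (Fin d → ℝ) → Fin d → ℝ, ContDiff ℝ (⊤ : ℕ∞) φ → HasCompactSupport φ →
    (∀ x, ‖φ x‖ ≤ 1) → (∀ x, R ≤ ‖x‖ → φ x = 0) →
    ∀ i, |∫ x, u x i * ∑ j, pDeriv (fun y => φ y j) j x| ≤ C

/-- `u ∈ BV_loc(ℝᵈ;ℝᵈ)` : its distributional derivative is a locally finite
matrix-valued Radon measure. -/
def BVloc {d : ℕ} (u : (Fin d → ℝ) → Fin d → ℝ) : Prop := ∀ R > 0, ∃ C, BVlocBound u R C

/-- `b ∈ L¹_loc(S ; BV_loc(ℝᵈ;ℝᵈ))`, over the time set `S`. -/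
def L1locBVloc {d : ℕ} (S : Set ℝ) (b : ℝ × (Fin d → ℝ) → Fin d → ℝ) : Prop :=
  ∀ R > 0, ∃ V : ℝ → ℝ, (∀ K : Set ℝ, IsCompact K → K ⊆ S → IntegrableOn V K) ∧
    ∀ᵐ t ∂(volume : Measure ℝ), t ∈ S → BVlocBound (fun x => b (t, x)) R (V t)

/-- A standard mollifier on `ℝ × ℝᵈ`. -/
structure StdMollifier (d : ℕ) where
  θ : ℝ × (Fin d → ℝ) → ℝ
  smooth : ContDiff ℝ (⊤ : ℕ∞) θ
  cpt : HasCompactSupport θ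
  nonneg : ∀ p, 0 ≤ θ p
  total : ∫ p, θ p = 1

/-- The rescaled mollifier `θᵏ(t,x) = k^{d+1} θ(kt, kx)`. -/
def mollScale {d : ℕ} (θ : ℝ × (Fin d → ℝ) → ℝ) (k : ℕ) (p : ℝ × (Fin d → ℝ)) : ℝ :=
  (k : ℝ) ^ (d + 1) * θ ((k : ℝ) * p.1, (k : ℝ) • p.2)

/-- Extension of a vector field by zero to negative times. -/
def extZero {d : ℕ} (b : ℝ × (Fin d → ℝ) → Fin d → ℝ) (p : ℝ × (Fin d → ℝ)) : Fin d → ℝ :=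
  if 0 ≤ p.1 then b p else 0

/-- The convolution regularisation `b ⋆ θᵏ` (of the extension of `b` by zero). -/
def convReg {d : ℕ} (b : ℝ × (Fin d → ℝ) → Fin d → ℝ) (θ : ℝ × (Fin d → ℝ) → ℝ) (k : ℕ)
    (p : ℝ × (Fin d → ℝ)) : Fin d → ℝ :=
  fun i => ∫ q : ℝ × (Fin d → ℝ), mollScale θ k q * extZero b (p.1 - q.1, p.2 - q.2) i

/-- `X` is the two-parameter flow of the vector field `b`:
`X s s x = x` and `∂ₜ X(t,s,x) = b(t, X(t,s,x))`. -/
def IsFlow {d : ℕ} (b : ℝ × (Fin d → ℝ) → Fin d → ℝ)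
    (X : ℝ → ℝ → (Fin d → ℝ) → Fin d → ℝ) : Prop :=
  (∀ s x, X s s x = x) ∧ ∀ s x t, HasDerivAt (fun u => X u s x) (b (t, X t s x)) t

/-- Convergence in the sense of distributions on `(0,∞) × ℝᵈ`. -/
def TendstoDistrib {d : ℕ} (ρk : ℕ → ℝ × (Fin d → ℝ) → ℝ) (ρ : ℝ × (Fin d → ℝ) → ℝ) : Prop :=
  ∀ φ : ℝ × (Fin d → ℝ) → ℝ, ContDiff ℝ (⊤ : ℕ∞) φ → HasCompactSupport φ →
    (∀ p : ℝ × (Fin d → ℝ), p.1 ≤ 0 → φ p = 0) →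
    Tendsto (fun k => ∫ p, ρk k p * φ p) atTop (𝓝 (∫ p, ρ p * φ p))

/-- `ρt` is a time-continuous representative of `ρ`, i.e. a version of `ρ` taking
values in `L^∞(ℝᵈ)` which is continuous in time for the weak-star topology. -/
def IsTimeContRep {d : ℕ} (ρ : ℝ × (Fin d → ℝ) → ℝ) (ρt : ℝ → (Fin d → ℝ) → ℝ) : Prop :=
  (∀ᵐ p ∂(volume : Measure (ℝ × (Fin d → ℝ))), ρt p.1 p.2 = ρ p) ∧
  (∀ t, ∃ M : ℝ, ∀ᵐ x ∂(volume : Measure (Fin d → ℝ)), |ρt t x| ≤ M) ∧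
  ∀ φ : (Fin d → ℝ) → ℝ, Integrable φ → Continuous (fun t => ∫ x, ρt t x * φ x)

/-- The dyadic cube of side `2^{-k}` with corner `2^{-k} n`, `n ∈ ℤᵈ`. -/
def dyCube (d k : ℕ) (n : Fin d → ℤ) : Set (Fin d → ℝ) :=
  {x | ∀ i, (n i : ℝ) * (2 : ℝ) ^ (-(k : ℤ)) ≤ x i ∧ x i < ((n i : ℝ) + 1) * (2 : ℝ) ^ (-(k : ℤ))}


open scoped RealInnerProductSpace ENNReal NNReal

section AuxLemmas

/-- truncation of a real number at level `m`. -/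
def trc (m : ℕ) (a : ℝ) : ℝ := max (-(m:ℝ)) (min a (m:ℝ))

/-- excess of `a` over level `m`. -/
def excess (m : ℕ) (a : ℝ) : ℝ := if (m:ℝ) < |a| then |a| else 0

lemma excess_nonneg (m : ℕ) (a : ℝ) : 0 ≤ excess m a := by
  unfold excess; split
  · exact abs_nonneg a
  · exact le_refl 0

lemma excess_le_abs (m : ℕ) (a : ℝ) : excess m a ≤ |a| := by
  unfold excess; split
  · exact le_refl _
  · exact abs_nonneg a

lemma excess_antitone {m m' : ℕ} (h : m ≤ m') (a : ℝ) : excess m' a ≤ excess m a := by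
  unfold excess
  by_cases h1 : (m':ℝ) < |a|
  · rw [if_pos h1, if_pos (lt_of_le_of_lt (by exact_mod_cast h) h1)]
  · rw [if_neg h1]
    split
    · exact abs_nonneg a
    · exact le_refl 0

lemma neg_le_trc (m : ℕ) (a : ℝ) : -(m:ℝ) ≤ trc m a := le_max_left _ _

lemma trc_le (m : ℕ) (a : ℝ) : trc m a ≤ (m:ℝ) := by
  unfold trc
  exact max_le (by simp) (min_le_right _ _)

lemma abs_trc_le (m : ℕ) (a : ℝ) : |trc m a| ≤ (m:ℝ) :=
  abs_le.2 ⟨neg_le_trc m a, trc_le m a⟩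

lemma trc_eq_self {m : ℕ} {a : ℝ} (h : |a| ≤ (m:ℝ)) : trc m a = a := by
  rw [abs_le] at h
  unfold trc
  rw [min_eq_left h.2, max_eq_right h.1]

lemma abs_trc_le_abs (m : ℕ) (a : ℝ) : |trc m a| ≤ |a| := by
  by_cases h : |a| ≤ (m:ℝ)
  · rw [trc_eq_self h]
  · push_neg at h
    exact le_trans (abs_trc_le m a) h.le

lemma abs_sub_trc_le (m : ℕ) (a : ℝ) : |a - trc m a| ≤ excess m a := by
  by_cases h : |a| ≤ (m:ℝ)
  · rw [trc_eq_self h, sub_self, abs_zero]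
    exact excess_nonneg m a
  · push_neg at h
    unfold excess
    rw [if_pos h]
    have hm : (0:ℝ) ≤ (m:ℝ) := by positivity
    rcases le_total 0 a with ha | ha
    · rw [abs_of_nonneg ha] at h ⊢
      have : trc m a = (m:ℝ) := by
        unfold trc
        rw [min_eq_right h.le, max_eq_right (by linarith)]
      rw [this, abs_of_nonneg (by linarith)]
      linarith
    · rw [abs_of_nonpos ha] at h ⊢
      have : trc m a = -(m:ℝ) := by
        unfold trc
        rw [min_eq_left (by linarith), max_eq_left (by linarith)]
      rw [this, abs_of_nonpos (by linarith)]
      linarith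

lemma abs_trc_sub_trc_le (m m' : ℕ) (a : ℝ) :
    |trc m a - trc m' a| ≤ 2 * excess (min m m') a := by
  by_cases h : |a| ≤ ((min m m' : ℕ):ℝ)
  · rw [trc_eq_self (le_trans h (by exact_mod_cast Nat.min_le_left m m')),
      trc_eq_self (le_trans h (by exact_mod_cast Nat.min_le_right m m')), sub_self, abs_zero]
    have := excess_nonneg (min m m') a
    linarith
  · push_neg at h
    unfold excess
    rw [if_pos h]
    calc |trc m a - trc m' a| ≤ |trc m a| + |trc m' a| := abs_sub _ _
      _ ≤ |a| + |a| := add_le_add (abs_trc_le_abs _ _) (abs_trc_le_abs _ _)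
      _ = 2 * |a| := by ring

lemma measurable_excess (m : ℕ) : Measurable (excess m) := by
  unfold excess
  exact Measurable.ite (measurableSet_lt measurable_const measurable_abs) measurable_abs
    measurable_const

lemma measurable_trc (m : ℕ) : Measurable (trc m) := by
  unfold trc
  exact measurable_const.max (measurable_id.min measurable_const)


/-- Bounded (doubly-indexed) sequences in a separable Hilbert space admit a common subsequence
along which each row converges weakly. -/
theorem hilbert_weak_subseq {H : Type*} [NormedAddCommGroup H] [InnerProductSpace ℝ H]
    [CompleteSpace H] [SecondCountableTopology H] (u : ℕ → ℕ → H) (B : ℕ → ℝ)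
    (hu : ∀ m j, ‖u m j‖ ≤ B m) :
    ∃ τ : ℕ → ℕ, StrictMono τ ∧ ∀ m, ∃ v : H,
      ∀ w : H, Tendsto (fun j => ⟪u m (τ j), w⟫) atTop (𝓝 ⟪v, w⟫) := by
  have hB : ∀ m, 0 ≤ B m := fun m => le_trans (norm_nonneg _) (hu m 0)
  obtain ⟨e, he⟩ := TopologicalSpace.exists_dense_seq H
  set c : ℕ × ℕ → ℝ := fun q => B q.1 * ‖e q.2‖ with hc
  set v : ℕ → (ℕ × ℕ) → ℝ := fun j q => ⟪u q.1 j, e q.2⟫ with hv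
  have hmem : ∀ j, v j ∈ Set.pi univ (fun q => Icc (-(c q)) (c q)) := by
    intro j q _
    have h1 : |⟪u q.1 j, e q.2⟫| ≤ c q := by
      refine le_trans (abs_real_inner_le_norm _ _) ?_
      exact mul_le_mul_of_nonneg_right (hu q.1 j) (norm_nonneg _)
    exact abs_le.1 h1
  obtain ⟨L, -, τ, hτ, hconv⟩ :=
    (isCompact_univ_pi (fun q => isCompact_Icc)).tendsto_subseq hmem
  have hpt : ∀ m i, Tendsto (fun j => ⟪u m (τ j), e i⟫) atTop (𝓝 (L (m, i))) := by
    intro m i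
    exact (tendsto_pi_nhds.1 hconv) (m, i)
  refine ⟨τ, hτ, fun m => ?_⟩
  -- every pairing converges
  have key : ∀ w : H, ∃ r : ℝ, Tendsto (fun j => ⟪u m (τ j), w⟫) atTop (𝓝 r) := by
    intro w
    apply cauchySeq_tendsto_of_complete
    rw [Metric.cauchySeq_iff]
    intro ε hε
    have hBpos : 0 < B m + 1 := by linarith [hB m]
    obtain ⟨i, hi⟩ := he.exists_dist_lt w (show 0 < ε / (4 * (B m + 1)) by positivity)
    have hcau := (hpt m i).cauchySeq
    rw [Metric.cauchySeq_iff] at hcau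
    obtain ⟨N, hN⟩ := hcau (ε / 2) (by positivity)
    refine ⟨N, fun j₁ hj₁ j₂ hj₂ => ?_⟩
    have est : ∀ j, |⟪u m (τ j), w⟫ - ⟪u m (τ j), e i⟫| ≤ B m * (ε / (4 * (B m + 1))) := by
      intro j
      have : ⟪u m (τ j), w⟫ - ⟪u m (τ j), e i⟫ = ⟪u m (τ j), w - e i⟫ := by
        rw [inner_sub_right]
      rw [this]
      refine le_trans (abs_real_inner_le_norm _ _) ?_
      have hwe : ‖w - e i‖ ≤ ε / (4 * (B m + 1)) := by
        rw [← dist_eq_norm]; exact hi.le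
      exact mul_le_mul (hu m (τ j)) hwe (norm_nonneg _) (hB m)
    have hBe : B m * (ε / (4 * (B m + 1))) ≤ ε / 4 := by
      rw [mul_div_assoc']
      rw [div_le_div_iff₀ (by positivity) (by norm_num)]
      nlinarith [hB m]
    have h12 := hN j₁ hj₁ j₂ hj₂
    rw [Real.dist_eq] at h12 ⊢
    have e1 := est j₁
    have e2 := est j₂
    have : |⟪u m (τ j₁), w⟫ - ⟪u m (τ j₂), w⟫| ≤
        |⟪u m (τ j₁), w⟫ - ⟪u m (τ j₁), e i⟫| + |⟪u m (τ j₁), e i⟫ - ⟪u m (τ j₂), e i⟫|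
          + |⟪u m (τ j₂), e i⟫ - ⟪u m (τ j₂), w⟫| := by
      have := abs_sub_le (⟪u m (τ j₁), w⟫) (⟪u m (τ j₁), e i⟫) (⟪u m (τ j₂), w⟫)
      have := abs_sub_le (⟪u m (τ j₁), e i⟫) (⟪u m (τ j₂), e i⟫) (⟪u m (τ j₂), w⟫)
      linarith
    rw [abs_sub_comm (⟪u m (τ j₂), e i⟫)] at this
    linarith
  choose r hr using key
  have hadd : ∀ w w', r (w + w') = r w + r w' := by
    intro w w'
    refine tendsto_nhds_unique ?_ ((hr w).add (hr w'))
    have heq : (fun j => ⟪u m (τ j), w + w'⟫) = fun j => ⟪u m (τ j), w⟫ + ⟪u m (τ j), w'⟫ := by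
      funext j; rw [inner_add_right]
    exact heq ▸ (hr (w + w'))
  have hsmul : ∀ (a : ℝ) w, r (a • w) = a * r w := by
    intro a w
    refine tendsto_nhds_unique ?_ ((hr w).const_mul a)
    have heq : (fun j => ⟪u m (τ j), a • w⟫) = fun j => a * ⟪u m (τ j), w⟫ := by
      funext j; rw [real_inner_smul_right]
    exact heq ▸ (hr (a • w))
  have hbound : ∀ w, ‖r w‖ ≤ B m * ‖w‖ := by
    intro w
    have h1 : Tendsto (fun j => |⟪u m (τ j), w⟫|) atTop (𝓝 |r w|) := (hr w).abs
    refine le_of_tendsto h1 (Eventually.of_forall fun j => ?_)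
    exact le_trans (abs_real_inner_le_norm _ _)
      (mul_le_mul_of_nonneg_right (hu m (τ j)) (norm_nonneg _))
  let ℓ : H →ₗ[ℝ] ℝ :=
    { toFun := r, map_add' := hadd, map_smul' := hsmul }
  let ℓc : H →L[ℝ] ℝ := LinearMap.mkContinuous ℓ (B m) hbound
  refine ⟨(InnerProductSpace.toDual ℝ H).symm ℓc, fun w => ?_⟩
  have : ⟪(InnerProductSpace.toDual ℝ H).symm ℓc, w⟫ = ℓc w :=
    InnerProductSpace.toDual_symm_apply
  rw [this]
  exact hr w


variable {E : Type*} [NormedAddCommGroup E] [NormedSpace ℝ E]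

/-- finite speed of propagation for a curve with bounded derivative. -/
lemma curve_speed {f : ℝ → E} {v : ℝ → E} {M : ℝ} (hf : ∀ t, HasDerivAt f (v t) t)
    (hv : ∀ t, ‖v t‖ ≤ M) (s t : ℝ) : ‖f t - f s‖ ≤ M * |t - s| := by
  have := Convex.norm_image_sub_le_of_norm_hasDerivWithin_le
    (f := f) (f' := v) (s := (univ : Set ℝ)) (C := M)
    (fun u _ => (hf u).hasDerivWithinAt) (fun u _ => hv u) convex_univ
    (mem_univ s) (mem_univ t)
  simpa [Real.norm_eq_abs] using this

/-- Forward Grönwall estimate for two exact solutions, with a uniform constant. -/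
lemma two_sol_forward {v : ℝ → E → E} {K : ℝ≥0} {s : Set E}
    (hv : ∀ t, LipschitzOnWith K (v t) s) {f g : ℝ → E} {a b : ℝ} (hab : a ≤ b)
    (hf : ∀ t ∈ Icc a b, HasDerivAt f (v t (f t)) t)
    (hg : ∀ t ∈ Icc a b, HasDerivAt g (v t (g t)) t)
    (hfs : ∀ t ∈ Icc a b, f t ∈ s) (hgs : ∀ t ∈ Icc a b, g t ∈ s) {δ : ℝ}
    (hd : dist (f a) (g a) ≤ δ) : dist (f b) (g b) ≤ δ * Real.exp (K * (b - a)) := by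
  have h := dist_le_of_trajectories_ODE_of_mem (v := v) (s := fun _ => s) (K := K)
    (fun t _ => hv t)
    (fun t ht => ((hf t ht).continuousAt).continuousWithinAt)
    (fun t ht => (hf t (Ico_subset_Icc_self ht)).hasDerivWithinAt)
    (fun t ht => hfs t (Ico_subset_Icc_self ht))
    (fun t ht => ((hg t ht).continuousAt).continuousWithinAt)
    (fun t ht => (hg t (Ico_subset_Icc_self ht)).hasDerivWithinAt)
    (fun t ht => hgs t (Ico_subset_Icc_self ht)) hd
  exact h b (right_mem_Icc.2 hab)

/-- Backward Grönwall estimate for two exact solutions. -/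
lemma two_sol_backward {v : ℝ → E → E} {K : ℝ≥0} {s : Set E}
    (hv : ∀ t, LipschitzOnWith K (v t) s) {f g : ℝ → E} {a b : ℝ} (hab : a ≤ b)
    (hf : ∀ t ∈ Icc a b, HasDerivAt f (v t (f t)) t)
    (hg : ∀ t ∈ Icc a b, HasDerivAt g (v t (g t)) t)
    (hfs : ∀ t ∈ Icc a b, f t ∈ s) (hgs : ∀ t ∈ Icc a b, g t ∈ s) {δ : ℝ}
    (hd : dist (f b) (g b) ≤ δ) : dist (f a) (g a) ≤ δ * Real.exp (K * (b - a)) := by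
  set w : ℝ → E → E := fun u y => -(v (a + b - u) y) with hw
  have hwlip : ∀ t, LipschitzOnWith K (w t) s := by
    intro t x hx y hy
    have := hv (a + b - t) hx hy
    simpa [hw, edist_neg_neg] using this
  have haff : ∀ u : ℝ, HasDerivAt (fun z : ℝ => a + b - z) (-1 : ℝ) u := by
    intro u
    simpa using ((hasDerivAt_id u).const_sub (a + b))
  set F : ℝ → E := fun u => f (a + b - u) with hF
  set G : ℝ → E := fun u => g (a + b - u) with hG
  have hmemJ : ∀ u ∈ Icc a b, a + b - u ∈ Icc a b := by
    intro u hu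
    constructor <;> [linarith [hu.2]; linarith [hu.1]]
  have hF' : ∀ t ∈ Icc a b, HasDerivAt F (w t (F t)) t := by
    intro t ht
    have h1 := (hf (a + b - t) (hmemJ t ht)).scomp t (haff t)
    simpa [hF, hw, Function.comp_def] using h1
  have hG' : ∀ t ∈ Icc a b, HasDerivAt G (w t (G t)) t := by
    intro t ht
    have h1 := (hg (a + b - t) (hmemJ t ht)).scomp t (haff t)
    simpa [hG, hw, Function.comp_def] using h1
  have := two_sol_forward hwlip hab hF' hG'
    (fun t ht => hfs _ (hmemJ t ht)) (fun t ht => hgs _ (hmemJ t ht))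
    (δ := δ) (by simpa [hF, hG] using hd)
  simpa [hF, hG] using this

/-- A smooth map is Lipschitz on a convex compact set. -/
lemma lip_of_contDiff {F : Type*} [NormedAddCommGroup F] [NormedSpace ℝ F]
    {b : E → F} (hb : ContDiff ℝ (⊤ : ℕ∞) b) {s : Set E} (hs : Convex ℝ s) (hc : IsCompact s) :
    ∃ K : ℝ≥0, LipschitzOnWith K b s := by
  obtain ⟨C, hC⟩ := hc.exists_bound_of_continuousOn
    ((hb.continuous_fderiv (by simp)).continuousOn)
  refine ⟨Real.toNNReal C, ?_⟩
  refine hs.lipschitzOnWith_of_nnnorm_hasFDerivWithin_le (f' := fun x => fderiv ℝ b x)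
    (fun x _ => ((hb.differentiable (by simp)) x).hasFDerivAt.hasFDerivWithinAt) ?_
  intro x hx
  rw [← NNReal.coe_le_coe, coe_nnnorm, Real.coe_toNNReal']
  exact le_trans (hC x hx) (le_max_left _ _)


set_option maxHeartbeats 1000000 in
/-- continuity in the initial time of the backward flow map. -/
lemma flow_cont {d : ℕ} {b : ℝ × (Fin d → ℝ) → Fin d → ℝ} (hsm : ContDiff ℝ (⊤ : ℕ∞) b)
    {M : ℝ} (hbnd : ∀ p, ‖b p‖ ≤ M)
    {X : ℝ → ℝ → (Fin d → ℝ) → Fin d → ℝ}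
    (hX0 : ∀ s x, X s s x = x)
    (hXd : ∀ s x t, HasDerivAt (fun u => X u s x) (b (t, X t s x)) t)
    (x : Fin d → ℝ) : Continuous fun t => X 0 t x := by
  have hM0 : 0 ≤ M := le_trans (norm_nonneg _) (hbnd (0, x))
  rw [continuous_iff_continuousAt]
  intro t₀
  set T : ℝ := |t₀| + 2 with hT
  have hT0 : 0 < T := by positivity
  set B := Metric.closedBall x (M * (2 * T) + 1) with hB
  obtain ⟨K, hK⟩ := lip_of_contDiff hsm (s := (Icc (-T) T) ×ˢ B)
    ((convex_Icc (-T) T).prod (convex_closedBall _ _))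
    ((isCompact_Icc (a := -T) (b := T)).prod (isCompact_closedBall _ _))
  set c : ℝ → ℝ := fun u => max (-T) (min u T) with hc
  have hcJ : ∀ u, c u ∈ Icc (-T) T := by
    intro u
    exact ⟨le_max_left _ _, max_le (by linarith) (min_le_right _ _)⟩
  have hcid : ∀ u ∈ Icc (-T) T, c u = u := by
    intro u hu
    rw [hc]
    simp only
    rw [min_eq_left hu.2, max_eq_right hu.1]
  set v : ℝ → (Fin d → ℝ) → (Fin d → ℝ) := fun u y => b (c u, y) with hv
  have hvlip : ∀ u, LipschitzOnWith K (v u) B := by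
    intro u y hy z hz
    have h1 := hK (Set.mk_mem_prod (hcJ u) hy) (Set.mk_mem_prod (hcJ u) hz)
    calc edist (v u y) (v u z) ≤ K * edist ((c u, y)) ((c u, z)) := h1
      _ = K * edist y z := by rw [Prod.edist_eq]; simp
  set L : ℝ := M * Real.exp (K * (2 * T)) with hL
  have hL0 : 0 ≤ L := by positivity
  have est : ∀ t, |t - t₀| ≤ 1 → dist (X 0 t x) (X 0 t₀ x) ≤ L * |t - t₀| := by
    intro t ht
    have htJ : t ∈ Icc (-T) T := by
      rw [mem_Icc]
      have h1 : |t| ≤ |t₀| + 1 := by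
        have := abs_sub_abs_le_abs_sub t t₀
        linarith [abs_le.1 (le_refl |t - t₀|)]
      rw [abs_le] at h1
      constructor <;> linarith [h1.1, h1.2]
    have ht₀J : t₀ ∈ Icc (-T) T := by
      rw [mem_Icc]
      have := le_abs_self t₀
      have := neg_abs_le t₀
      constructor <;> linarith
    set f : ℝ → Fin d → ℝ := fun u => X u t x with hf
    set g : ℝ → Fin d → ℝ := fun u => X u t₀ x with hg
    have hfd : ∀ u, HasDerivAt f (b (u, f u)) u := hXd t x
    have hgd : ∀ u, HasDerivAt g (b (u, g u)) u := hXd t₀ x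
    have hfb : ∀ u, ‖b (u, f u)‖ ≤ M := fun u => hbnd _
    have hgb : ∀ u, ‖b (u, g u)‖ ≤ M := fun u => hbnd _
    have hfx : f t = x := hX0 t x
    have hgx : g t₀ = x := hX0 t₀ x
    have hfB : ∀ u ∈ Icc (-T) T, f u ∈ B := by
      intro u hu
      rw [hB, Metric.mem_closedBall, dist_eq_norm]
      have h1 : ‖f u - f t‖ ≤ M * |u - t| := curve_speed hfd hfb t u
      have h2 : |u - t| ≤ 2 * T := by
        rw [abs_sub_le_iff]
        rw [mem_Icc] at hu htJ
        constructor <;> linarith [hu.1, hu.2, htJ.1, htJ.2]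
      rw [hfx] at h1
      nlinarith
    have hgB : ∀ u ∈ Icc (-T) T, g u ∈ B := by
      intro u hu
      rw [hB, Metric.mem_closedBall, dist_eq_norm]
      have h1 : ‖g u - g t₀‖ ≤ M * |u - t₀| := curve_speed hgd hgb t₀ u
      have h2 : |u - t₀| ≤ 2 * T := by
        rw [abs_sub_le_iff]
        rw [mem_Icc] at hu ht₀J
        constructor <;> linarith [hu.1, hu.2, ht₀J.1, ht₀J.2]
      rw [hgx] at h1
      nlinarith
    have hfv : ∀ u ∈ Icc (-T) T, HasDerivAt f (v u (f u)) u := by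
      intro u hu
      have := hfd u
      rw [hv]
      simp only
      rw [hcid u hu]
      exact this
    have hgv : ∀ u ∈ Icc (-T) T, HasDerivAt g (v u (g u)) u := by
      intro u hu
      have := hgd u
      rw [hv]
      simp only
      rw [hcid u hu]
      exact this
    set δ : ℝ := M * |t - t₀| with hδ
    have hdt₀ : dist (f t₀) (g t₀) ≤ δ := by
      rw [hgx, dist_eq_norm]
      have := curve_speed hfd hfb t t₀
      rw [hfx] at this
      rw [hδ, abs_sub_comm]
      exact this
    have hexp : ∀ r : ℝ, 0 ≤ r → r ≤ 2 * T →
        δ * Real.exp (K * r) ≤ L * |t - t₀| := by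
      intro r hr0 hr
      rw [hδ, hL]
      have h1 : Real.exp ((K:ℝ) * r) ≤ Real.exp ((K:ℝ) * (2 * T)) := by
        apply Real.exp_le_exp.2
        exact mul_le_mul_of_nonneg_left hr (K.coe_nonneg)
      calc M * |t - t₀| * Real.exp (K * r) ≤ M * |t - t₀| * Real.exp (K * (2 * T)) := by
            refine mul_le_mul_of_nonneg_left h1 (by positivity)
        _ = M * Real.exp (K * (2 * T)) * |t - t₀| := by ring
    have hmain : dist (f 0) (g 0) ≤ L * |t - t₀| := by
      rcases le_total 0 t₀ with h0 | h0
      · have hsub : Icc 0 t₀ ⊆ Icc (-T) T := by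
          apply Icc_subset_Icc <;> [linarith; exact (mem_Icc.1 ht₀J).2]
        have := two_sol_backward hvlip h0
          (fun u hu => hfv u (hsub hu)) (fun u hu => hgv u (hsub hu))
          (fun u hu => hfB u (hsub hu)) (fun u hu => hgB u (hsub hu))
          (δ := δ) hdt₀
        refine le_trans this (hexp (t₀ - 0) (by linarith) ?_)
        have := (mem_Icc.1 ht₀J).2
        linarith
      · have hsub : Icc t₀ 0 ⊆ Icc (-T) T := by
          apply Icc_subset_Icc <;> [exact (mem_Icc.1 ht₀J).1; linarith]
        have := two_sol_forward hvlip h0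
          (fun u hu => hfv u (hsub hu)) (fun u hu => hgv u (hsub hu))
          (fun u hu => hfB u (hsub hu)) (fun u hu => hgB u (hsub hu))
          (δ := δ) hdt₀
        refine le_trans this (hexp (0 - t₀) (by linarith) ?_)
        have := (mem_Icc.1 ht₀J).1
        linarith
    exact hmain
  -- continuity from the local Lipschitz estimate
  rw [Metric.continuousAt_iff]
  intro ε hε
  refine ⟨min 1 (ε / (L + 1)), lt_min one_pos (by positivity), fun {t} htd => ?_⟩
  have h1 : |t - t₀| ≤ 1 := le_of_lt (lt_of_lt_of_le htd (min_le_left _ _))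
  have h2 : |t - t₀| < ε / (L + 1) := by
    rw [Real.dist_eq] at htd
    exact lt_of_lt_of_le htd (min_le_right _ _)
  have h3 := est t h1
  have h4 : (L + 1) * |t - t₀| < ε := by
    rw [lt_div_iff₀ (by positivity)] at h2
    linarith [mul_comm (L + 1) |t - t₀|]
  calc dist (X 0 t x) (X 0 t₀ x) ≤ L * |t - t₀| := h3
    _ < ε := by nlinarith [abs_nonneg (t - t₀)]


variable {α : Type*} [MeasurableSpace α] {μ : MeasureTheory.Measure α}

lemma continuous_trc (m : ℕ) : Continuous (trc m) :=
  continuous_const.max (continuous_id.min continuous_const)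

lemma integrable_of_bdd [IsFiniteMeasure μ] {h : α → ℝ} (hm : AEStronglyMeasurable h μ)
    (c : ℝ) (hc : ∀ x, |h x| ≤ c) : Integrable h μ :=
  memLp_one_iff_integrable.1 <|
    (memLp_top_of_bound hm c (Eventually.of_forall fun x => by
      simpa [Real.norm_eq_abs] using hc x)).mono_exponent le_top

lemma integrable_mul_bdd {u h : α → ℝ} (hu : Integrable u μ) (hm : AEStronglyMeasurable h μ)
    (c : ℝ) (hc : ∀ x, |h x| ≤ c) : Integrable (fun x => u x * h x) μ := by
  have := hu.bdd_mul hm (Eventually.of_forall fun x => by simpa [Real.norm_eq_abs] using hc x)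
  simpa [mul_comm] using this

lemma memℒp2_of_bdd [IsFiniteMeasure μ] {h : α → ℝ} (hm : AEStronglyMeasurable h μ)
    (c : ℝ) (hc : ∀ x, |h x| ≤ c) : MemLp h 2 μ :=
  (memLp_top_of_bound hm c (Eventually.of_forall fun x => by
      simpa [Real.norm_eq_abs] using hc x)).mono_exponent le_top

lemma abs_int_le {f : α → ℝ} : |∫ x, f x ∂μ| ≤ ∫ x, |f x| ∂μ := by
  simpa [Real.norm_eq_abs] using norm_integral_le_integral_norm (μ := μ) f

lemma L2_inner_eq (F W : Lp ℝ 2 μ) : ⟪F, W⟫ = ∫ x, F x * W x ∂μ := by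
  rw [L2.inner_def]
  refine integral_congr_ae (Eventually.of_forall fun x => ?_)
  simp [RCLike.inner_apply, starRingEnd_apply, mul_comm]

theorem dunford_pettis [MeasurableSpace.CountablyGenerated α]
    (μ : MeasureTheory.Measure α) [IsFiniteMeasure μ] (f : ℕ → α → ℝ)
    (hfm : ∀ j, AEStronglyMeasurable (f j) μ) (hfi : ∀ j, Integrable (f j) μ)
    (hui : ∀ ε > (0:ℝ), ∃ m : ℕ, ∀ j, ∫ x, excess m (f j x) ∂μ ≤ ε) :
    ∃ τ : ℕ → ℕ, StrictMono τ ∧ ∃ g : α → ℝ, Integrable g μ ∧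
      ∀ h : α → ℝ, Measurable h → (∃ M' : ℝ, ∀ x, |h x| ≤ M') →
        Tendsto (fun j => ∫ x, f (τ j) x * h x ∂μ) atTop (𝓝 (∫ x, g x * h x ∂μ)) := by
  haveI : Fact ((1:ℝ≥0∞) ≤ 2) := ⟨one_le_two⟩
  haveI : Fact ((2:ℝ≥0∞) ≠ ⊤) := ⟨by norm_num⟩
  -- integrability of excess
  have hexm : ∀ m j, AEStronglyMeasurable (fun x => excess m (f j x)) μ := fun m j =>
    (aestronglyMeasurable_iff_aemeasurable.2
      ((measurable_excess m).comp_aemeasurable (hfm j).aemeasurable))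
  have hexi : ∀ m j, Integrable (fun x => excess m (f j x)) μ := fun m j =>
    (hfi j).abs.mono (hexm m j) (Eventually.of_forall fun x => by
      simpa [Real.norm_eq_abs, abs_of_nonneg (excess_nonneg m (f j x)),
        abs_abs] using excess_le_abs m (f j x))
  -- truncations in L²
  have htm : ∀ m j, AEStronglyMeasurable (fun x => trc m (f j x)) μ := fun m j =>
    (continuous_trc m).comp_aestronglyMeasurable (hfm j)
  have hmem2 : ∀ m j, MemLp (fun x => trc m (f j x)) 2 μ := fun m j =>
    memℒp2_of_bdd (htm m j) m (fun x => abs_trc_le m (f j x))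
  set T : ℕ → ℕ → Lp ℝ 2 μ := fun m j => (hmem2 m j).toLp with hT
  set B : ℕ → ℝ := fun m => ((μ univ ^ (2:ℝ≥0∞).toReal⁻¹) * ENNReal.ofReal m).toReal with hB
  have hTB : ∀ m j, ‖T m j‖ ≤ B m := by
    intro m j
    rw [hT]
    rw [Lp.norm_toLp]
    refine ENNReal.toReal_mono ?_ ?_
    · exact ENNReal.mul_ne_top (ENNReal.rpow_ne_top_of_nonneg (by positivity)
        (measure_ne_top μ _)) ENNReal.ofReal_ne_top
    · exact eLpNorm_le_of_ae_bound (Eventually.of_forall fun x => by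
        simpa [Real.norm_eq_abs] using abs_trc_le m (f j x))
  obtain ⟨τ, hτ, hG⟩ := hilbert_weak_subseq T B hTB
  choose G hGw using hG
  -- pairing identity
  have pairT : ∀ m j (w : α → ℝ) (hw : MemLp w 2 μ),
      ⟪T m j, hw.toLp⟫ = ∫ x, trc m (f j x) * w x ∂μ := by
    intro m j w hw
    rw [L2_inner_eq]
    refine integral_congr_ae ?_
    filter_upwards [(hmem2 m j).coeFn_toLp, hw.coeFn_toLp] with x h1 h2
    rw [h1, h2]
  have pairG : ∀ m (w : α → ℝ) (hw : MemLp w 2 μ),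
      ⟪G m, hw.toLp⟫ = ∫ x, (G m : α → ℝ) x * w x ∂μ := by
    intro m w hw
    rw [L2_inner_eq]
    refine integral_congr_ae ?_
    filter_upwards [hw.coeFn_toLp] with x h2
    rw [h2]
  -- key limit against bounded measurable h
  have key : ∀ m (h : α → ℝ), Measurable h → ∀ M' : ℝ, (∀ x, |h x| ≤ M') →
      Tendsto (fun j => ∫ x, trc m (f (τ j) x) * h x ∂μ) atTop
        (𝓝 (∫ x, (G m : α → ℝ) x * h x ∂μ)) := by
    intro m h hm M' hM'
    have hw : MemLp h 2 μ := memℒp2_of_bdd hm.aestronglyMeasurable M' hM'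
    have := hGw m hw.toLp
    have h1 : (fun j => ⟪T m (τ j), hw.toLp⟫)
        = fun j => ∫ x, trc m (f (τ j) x) * h x ∂μ := by
      funext j; exact pairT m (τ j) h hw
    rw [h1, pairG m h hw] at this
    exact this
  -- the G m are Cauchy in L¹
  have gmi : ∀ m, Integrable (G m : α → ℝ) μ := fun m =>
    memLp_one_iff_integrable.1 ((Lp.memLp (G m)).mono_exponent one_le_two)
  have hdist : ∀ ε > (0:ℝ), ∃ N, ∀ m ≥ N, ∀ m' ≥ N,
      ∫ x, |(G m : α → ℝ) x - (G m' : α → ℝ) x| ∂μ ≤ 2 * ε := by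
    intro ε hε
    obtain ⟨m₀, hm₀⟩ := hui ε hε
    refine ⟨m₀, fun m hm m' hm' => ?_⟩
    -- sign function
    obtain ⟨u, hum, huae⟩ := ((Lp.aestronglyMeasurable (G m)).sub
      (Lp.aestronglyMeasurable (G m'))).aemeasurable
    set s : α → ℝ := fun x => if 0 ≤ u x then 1 else -1 with hs
    have hsm : Measurable s := by
      refine Measurable.ite (measurableSet_le measurable_const hum) ?_ ?_ <;>
        exact measurable_const
    have hs1 : ∀ x, |s x| ≤ 1 := by
      intro x; by_cases h0 : 0 ≤ u x <;> simp [hs, h0]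
    have hsL2 : MemLp s 2 μ := memℒp2_of_bdd hsm.aestronglyMeasurable 1 hs1
    -- ∫ |Gm - Gm'| = ⟪Gm - Gm', s⟫
    have habs : ∫ x, |(G m : α → ℝ) x - (G m' : α → ℝ) x| ∂μ
        = ⟪G m - G m', hsL2.toLp⟫ := by
      rw [L2_inner_eq]
      refine integral_congr_ae ?_
      filter_upwards [hsL2.coeFn_toLp, Lp.coeFn_sub (G m) (G m'), huae] with x h1 h2 h3
      rw [h2, h1]
      simp only [Pi.sub_apply] at h3 ⊢
      by_cases h0 : 0 ≤ u x
      · have hpos : 0 ≤ (G m : α → ℝ) x - (G m' : α → ℝ) x := by rw [h3]; exact h0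
        rw [show s x = 1 by simp [hs, h0], mul_one, abs_of_nonneg hpos]
      · push_neg at h0
        have hneg : (G m : α → ℝ) x - (G m' : α → ℝ) x < 0 := by rw [h3]; exact h0
        rw [show s x = -1 by simp [hs, not_le.2 h0], abs_of_neg hneg]
        ring
    rw [habs]
    -- limit of truncation pairings
    have hlim : Tendsto (fun j => ⟪T m (τ j) - T m' (τ j), hsL2.toLp⟫) atTop
        (𝓝 ⟪G m - G m', hsL2.toLp⟫) := by
      simp only [inner_sub_left]
      exact ((hGw m hsL2.toLp).sub (hGw m' hsL2.toLp))
    refine le_of_tendsto hlim (Eventually.of_forall fun j => ?_)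
    have e1 : ⟪T m (τ j) - T m' (τ j), hsL2.toLp⟫
        = ∫ x, (trc m (f (τ j) x) - trc m' (f (τ j) x)) * s x ∂μ := by
      simp only [inner_sub_left]
      rw [pairT m (τ j) s hsL2, pairT m' (τ j) s hsL2]
      rw [← integral_sub]
      · congr 1; funext x; ring
      · exact integrable_mul_bdd (integrable_of_bdd (htm m (τ j)) m
          (fun x => abs_trc_le m _)) hsm.aestronglyMeasurable 1 hs1
      · exact integrable_mul_bdd (integrable_of_bdd (htm m' (τ j)) m'
          (fun x => abs_trc_le m' _)) hsm.aestronglyMeasurable 1 hs1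
    rw [e1]
    have e2 : ∀ x, |(trc m (f (τ j) x) - trc m' (f (τ j) x)) * s x|
        ≤ 2 * excess m₀ (f (τ j) x) := by
      intro x
      rw [abs_mul]
      calc |trc m (f (τ j) x) - trc m' (f (τ j) x)| * |s x|
          ≤ |trc m (f (τ j) x) - trc m' (f (τ j) x)| * 1 := by
            refine mul_le_mul_of_nonneg_left (hs1 x) (abs_nonneg _)
        _ = |trc m (f (τ j) x) - trc m' (f (τ j) x)| := mul_one _
        _ ≤ 2 * excess (min m m') (f (τ j) x) := abs_trc_sub_trc_le _ _ _
        _ ≤ 2 * excess m₀ (f (τ j) x) := by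
            have := excess_antitone (le_min hm hm') (f (τ j) x)
            linarith
    calc ∫ x, (trc m (f (τ j) x) - trc m' (f (τ j) x)) * s x ∂μ
        ≤ |∫ x, (trc m (f (τ j) x) - trc m' (f (τ j) x)) * s x ∂μ| := le_abs_self _
      _ ≤ ∫ x, |(trc m (f (τ j) x) - trc m' (f (τ j) x)) * s x| ∂μ := abs_int_le
      _ ≤ ∫ x, 2 * excess m₀ (f (τ j) x) ∂μ := by
          refine integral_mono ?_ ((hexi m₀ (τ j)).const_mul 2) e2
          · refine (Integrable.abs ?_)
            refine integrable_mul_bdd ?_ hsm.aestronglyMeasurable 1 hs1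
            refine integrable_of_bdd ((htm m (τ j)).sub (htm m' (τ j))) ((m:ℝ) + m') ?_
            intro x
            calc |trc m (f (τ j) x) - trc m' (f (τ j) x)|
                ≤ |trc m (f (τ j) x)| + |trc m' (f (τ j) x)| := abs_sub _ _
              _ ≤ (m:ℝ) + (m':ℝ) := add_le_add (abs_trc_le _ _) (abs_trc_le _ _)
      _ = 2 * ∫ x, excess m₀ (f (τ j) x) ∂μ := integral_const_mul 2 _
      _ ≤ 2 * ε := by have := hm₀ (τ j); linarith
  -- Cauchy in L¹, get limit g
  set Gm1 : ℕ → Lp ℝ 1 μ := fun m =>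
    ((Lp.memLp (G m)).mono_exponent one_le_two).toLp with hGm1
  have hdisteq : ∀ m m', dist (Gm1 m) (Gm1 m')
      = ∫ x, |(G m : α → ℝ) x - (G m' : α → ℝ) x| ∂μ := by
    intro m m'
    rw [dist_eq_norm, Lp.norm_def, eLpNorm_one_eq_lintegral_enorm]
    have hint : Integrable ((G m : α → ℝ) - (G m' : α → ℝ)) μ := (gmi m).sub (gmi m')
    have : ∫⁻ x, ‖(Gm1 m - Gm1 m') x‖ₑ ∂μ
        = ∫⁻ x, ‖((G m : α → ℝ) - (G m' : α → ℝ)) x‖ₑ ∂μ := by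
      refine lintegral_congr_ae ?_
      filter_upwards [Lp.coeFn_sub (Gm1 m) (Gm1 m'),
        ((Lp.memLp (G m)).mono_exponent one_le_two).coeFn_toLp,
        ((Lp.memLp (G m')).mono_exponent one_le_two).coeFn_toLp] with x h1 h2 h3
      rw [h1]
      simp only [Pi.sub_apply]
      rw [h2, h3]
    rw [this, ← ofReal_integral_norm_eq_lintegral_enorm hint]
    rw [ENNReal.toReal_ofReal (by positivity)]
    congr 1
  have hcauchy : CauchySeq Gm1 := by
    rw [Metric.cauchySeq_iff]
    intro ε hε
    obtain ⟨N, hN⟩ := hdist (ε / 4) (by positivity)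
    refine ⟨N, fun m hm m' hm' => ?_⟩
    rw [hdisteq]
    calc ∫ x, |(G m : α → ℝ) x - (G m' : α → ℝ) x| ∂μ ≤ 2 * (ε / 4) := hN m hm m' hm'
      _ < ε := by linarith
  obtain ⟨Glim, hGlim⟩ := cauchySeq_tendsto_of_complete hcauchy
  set g : α → ℝ := ⇑Glim with hg
  have hgint : Integrable g μ := L1.integrable_coeFn Glim
  have htail : Tendsto (fun m => ∫ x, |(G m : α → ℝ) x - g x| ∂μ) atTop (𝓝 0) := by
    have h1 : Tendsto (fun m => dist (Gm1 m) Glim) atTop (𝓝 0) :=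
      tendsto_iff_dist_tendsto_zero.1 hGlim
    refine h1.congr fun m => ?_
    rw [dist_eq_norm, Lp.norm_def, eLpNorm_one_eq_lintegral_enorm]
    have hint : Integrable ((G m : α → ℝ) - g) μ := (gmi m).sub hgint
    have : ∫⁻ x, ‖(Gm1 m - Glim) x‖ₑ ∂μ = ∫⁻ x, ‖((G m : α → ℝ) - g) x‖ₑ ∂μ := by
      refine lintegral_congr_ae ?_
      filter_upwards [Lp.coeFn_sub (Gm1 m) Glim,
        ((Lp.memLp (G m)).mono_exponent one_le_two).coeFn_toLp] with x h1 h2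
      rw [h1]
      simp only [Pi.sub_apply]
      rw [h2]
    rw [this, ← ofReal_integral_norm_eq_lintegral_enorm hint,
      ENNReal.toReal_ofReal (by positivity)]
    congr 1
  refine ⟨τ, hτ, g, hgint, ?_⟩
  intro h hm hbd
  obtain ⟨M', hM'⟩ := hbd
  set M'' : ℝ := max M' 0 with hM''
  have hM''b : ∀ x, |h x| ≤ M'' := fun x => le_trans (hM' x) (le_max_left _ _)
  have hM''0 : 0 ≤ M'' := le_max_right _ _
  rw [Metric.tendsto_atTop]
  intro ε hε
  set δ : ℝ := ε / (4 * (M'' + 1)) with hδ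
  have hδ0 : 0 < δ := by rw [hδ]; positivity
  obtain ⟨m₁, hm₁⟩ := hui δ hδ0
  obtain ⟨m₂, hm₂⟩ := (Metric.tendsto_atTop.1 htail) δ hδ0
  set m : ℕ := max m₁ m₂ with hmdef
  have hgm_close : ∫ x, |(G m : α → ℝ) x - g x| ∂μ < δ := by
    have := hm₂ m (le_max_right _ _)
    rw [Real.dist_eq, sub_zero] at this
    exact lt_of_abs_lt this
  obtain ⟨J, hJ⟩ := (Metric.tendsto_atTop.1 (key m h hm M'' hM''b)) (ε/4) (by positivity)
  refine ⟨J, fun j hj => ?_⟩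
  have hJ' := hJ j hj
  rw [Real.dist_eq] at hJ' ⊢
  have int1 : Integrable (fun x => f (τ j) x * h x) μ :=
    integrable_mul_bdd (hfi _) hm.aestronglyMeasurable M'' hM''b
  have int2 : Integrable (fun x => trc m (f (τ j) x) * h x) μ :=
    integrable_mul_bdd (integrable_of_bdd (htm m _) m (fun x => abs_trc_le m _))
      hm.aestronglyMeasurable M'' hM''b
  have int3 : Integrable (fun x => (G m : α → ℝ) x * h x) μ :=
    integrable_mul_bdd (gmi m) hm.aestronglyMeasurable M'' hM''b
  have int4 : Integrable (fun x => g x * h x) μ :=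
    integrable_mul_bdd hgint hm.aestronglyMeasurable M'' hM''b
  have hexmono : ∫ x, excess m (f (τ j) x) ∂μ ≤ δ := by
    refine le_trans (integral_mono (hexi m (τ j)) (hexi m₁ (τ j)) ?_) (hm₁ (τ j))
    exact fun x => excess_antitone (le_max_left _ _) (f (τ j) x)
  have e1 : |∫ x, f (τ j) x * h x ∂μ - ∫ x, trc m (f (τ j) x) * h x ∂μ| ≤ M'' * δ := by
    rw [← integral_sub int1 int2]
    refine le_trans abs_int_le ?_
    have hb : ∀ x, |f (τ j) x * h x - trc m (f (τ j) x) * h x|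
        ≤ excess m (f (τ j) x) * M'' := by
      intro x
      have : f (τ j) x * h x - trc m (f (τ j) x) * h x
          = (f (τ j) x - trc m (f (τ j) x)) * h x := by ring
      rw [this, abs_mul]
      exact mul_le_mul (abs_sub_trc_le m _) (hM''b x) (abs_nonneg _)
        (excess_nonneg m _)
    refine le_trans (integral_mono (int1.sub int2).abs
      ((hexi m (τ j)).mul_const M'') hb) ?_
    rw [integral_mul_const]
    exact (mul_le_mul_of_nonneg_right hexmono hM''0).trans (le_of_eq (mul_comm _ _))
  have e3 : |∫ x, (G m : α → ℝ) x * h x ∂μ - ∫ x, g x * h x ∂μ| ≤ M'' * δ := by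
    rw [← integral_sub int3 int4]
    refine le_trans abs_int_le ?_
    have hb : ∀ x, |(G m : α → ℝ) x * h x - g x * h x|
        ≤ |(G m : α → ℝ) x - g x| * M'' := by
      intro x
      have : (G m : α → ℝ) x * h x - g x * h x = ((G m : α → ℝ) x - g x) * h x := by ring
      rw [this, abs_mul]
      exact mul_le_mul_of_nonneg_left (hM''b x) (abs_nonneg _)
    refine le_trans (integral_mono (int3.sub int4).abs
      (((gmi m).sub hgint).abs.mul_const M'') hb) ?_
    rw [integral_mul_const]
    calc (∫ x, |(G m : α → ℝ) x - g x| ∂μ) * M'' ≤ δ * M'' :=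
        mul_le_mul_of_nonneg_right hgm_close.le hM''0
      _ = M'' * δ := mul_comm _ _
  have hMδ : M'' * δ ≤ ε / 4 := by
    rw [hδ, mul_div_assoc']
    rw [div_le_div_iff₀ (by positivity) (by norm_num)]
    nlinarith
  have tri : |∫ x, f (τ j) x * h x ∂μ - ∫ x, g x * h x ∂μ|
      ≤ |∫ x, f (τ j) x * h x ∂μ - ∫ x, trc m (f (τ j) x) * h x ∂μ|
        + |∫ x, trc m (f (τ j) x) * h x ∂μ - ∫ x, (G m : α → ℝ) x * h x ∂μ|
        + |∫ x, (G m : α → ℝ) x * h x ∂μ - ∫ x, g x * h x ∂μ| := by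
    have := abs_sub_le (∫ x, f (τ j) x * h x ∂μ) (∫ x, trc m (f (τ j) x) * h x ∂μ)
      (∫ x, g x * h x ∂μ)
    have := abs_sub_le (∫ x, trc m (f (τ j) x) * h x ∂μ) (∫ x, (G m : α → ℝ) x * h x ∂μ)
      (∫ x, g x * h x ∂μ)
    linarith
  linarith


end AuxLemmas

set_option maxHeartbeats 2000000 in
/-- the densities `ρᵏ(t,·) = ρ₀ ∘ Xᵏ(0,t,·)` transported by measure-preserving
flows of uniformly bounded smooth divergence-free approximations are equi-integrable on
`[0,n] × [-n,n]ᵈ`, hence relatively weakly sequentially compact in `L¹` there. -/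
theorem stmt8 {d : ℕ} (b : ℝ × (Fin d → ℝ) → Fin d → ℝ) (M : ℝ) (hb : Bounded b M)
    (hdiv : DivFree b)
    (bk : ℕ → ℝ × (Fin d → ℝ) → Fin d → ℝ) (hbksm : ∀ k, ContDiff ℝ (⊤ : ℕ∞) (bk k))
    (hbkb : ∀ k, Bounded (bk k) M) (hbkdiv : ∀ k, DivFree (bk k))
    (Xk : ℕ → ℝ → ℝ → (Fin d → ℝ) → Fin d → ℝ) (hXk : ∀ k, IsFlow (bk k) (Xk k))
    (hmp : ∀ k t s, MeasurePreserving (Xk k t s)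
      (volume : Measure (Fin d → ℝ)) (volume : Measure (Fin d → ℝ)))
    (ρ₀ : (Fin d → ℝ) → ℝ) (hρ₀ : LocallyIntegrable ρ₀ (volume : Measure (Fin d → ℝ)))
    (ρk : ℕ → ℝ × (Fin d → ℝ) → ℝ) (hρk : ∀ k t x, ρk k (t, x) = ρ₀ (Xk k 0 t x))
    (n : ℕ) :
    (∀ ε > (0 : ℝ), ∃ C : ℝ, ∀ k,
      ∫ p in ((Icc (0:ℝ) n) ×ˢ (Set.pi Set.univ fun _ : Fin d => Icc (-(n:ℝ)) n)) ∩
          {p : ℝ × (Fin d → ℝ) | C < |ρk k p|}, |ρk k p| ≤ ε) ∧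
    ∀ σ : ℕ → ℕ, StrictMono σ → ∃ τ : ℕ → ℕ, StrictMono τ ∧
      ∃ g : ℝ × (Fin d → ℝ) → ℝ,
        IntegrableOn g ((Icc (0:ℝ) n) ×ˢ (Set.pi Set.univ fun _ : Fin d => Icc (-(n:ℝ)) n))
          (volume : Measure (ℝ × (Fin d → ℝ))) ∧
        ∀ h : ℝ × (Fin d → ℝ) → ℝ, Measurable h → (∃ M' : ℝ, ∀ p, |h p| ≤ M') →
          Tendsto (fun j => ∫ p in
              (Icc (0:ℝ) n) ×ˢ (Set.pi Set.univ fun _ : Fin d => Icc (-(n:ℝ)) n),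
              ρk (σ (τ j)) p * h p) atTop
            (𝓝 (∫ p in (Icc (0:ℝ) n) ×ˢ (Set.pi Set.univ fun _ : Fin d => Icc (-(n:ℝ)) n),
              g p * h p)) := by
  classical
  set box : Set (Fin d → ℝ) := Set.pi Set.univ fun _ : Fin d => Icc (-(n:ℝ)) n with hbox
  set Q : Set (ℝ × (Fin d → ℝ)) := (Icc (0:ℝ) n) ×ˢ box with hQdef
  have hQm : MeasurableSet Q :=
    measurableSet_Icc.prod (MeasurableSet.univ_pi fun _ => measurableSet_Icc)
  have hQc : IsCompact Q := (isCompact_Icc).prod (isCompact_univ_pi fun _ => isCompact_Icc)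
  have hM0 : 0 ≤ M := le_trans (norm_nonneg _) (hb (0, 0))
  have h0m := hρ₀.aestronglyMeasurable
  set ρt : (Fin d → ℝ) → ℝ := h0m.mk ρ₀ with hρt
  have hρtm : StronglyMeasurable ρt := h0m.stronglyMeasurable_mk
  have haeρ : ρ₀ =ᵐ[(volume : Measure (Fin d → ℝ))] ρt := h0m.ae_eq_mk
  set Φ : ℕ → ℝ × (Fin d → ℝ) → (Fin d → ℝ) := fun k p => Xk k 0 p.1 p.2 with hΦ
  have hΦm : ∀ k, Measurable (Φ k) := by
    intro k
    have hcont : ∀ x, Continuous fun t => Xk k 0 t x := fun x =>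
      flow_cont (hbksm k) (hbkb k) (hXk k).1 (hXk k).2 x
    have hmeas : ∀ t, StronglyMeasurable fun x => Xk k 0 t x := fun t =>
      (hmp k 0 t).measurable.stronglyMeasurable
    exact (stronglyMeasurable_uncurry_of_continuous_of_stronglyMeasurable
      (u := fun t x => Xk k 0 t x) hcont hmeas).measurable
  set Fk : ℕ → ℝ × (Fin d → ℝ) → ℝ := fun k p => ρt (Φ k p) with hFkdef
  have hFkm : ∀ k, Measurable (Fk k) := fun k => hρtm.measurable.comp (hΦm k)
  -- a.e. identification of ρk with its measurable representative
  have hae2 : ∀ k, ∀ᵐ p ∂(volume : Measure (ℝ × (Fin d → ℝ))), ρk k p = Fk k p := by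
    intro k
    set N : Set (Fin d → ℝ) := toMeasurable volume {y | ρ₀ y ≠ ρt y} with hN
    have hN0 : volume N = 0 := by
      rw [hN, measure_toMeasurable]
      exact ae_iff.1 haeρ
    have hNm : MeasurableSet N := measurableSet_toMeasurable _ _
    have hEk : (volume : Measure (ℝ × (Fin d → ℝ))) (Φ k ⁻¹' N) = 0 := by
      have hmeasEk : MeasurableSet (Φ k ⁻¹' N) := hΦm k hNm
      rw [Measure.volume_eq_prod, Measure.prod_apply hmeasEk]
      have hsl : ∀ t : ℝ, (volume : Measure (Fin d → ℝ)) (Prod.mk t ⁻¹' (Φ k ⁻¹' N)) = 0 := by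
        intro t
        have heq : Prod.mk t ⁻¹' (Φ k ⁻¹' N) = (Xk k 0 t) ⁻¹' N := rfl
        rw [heq, (hmp k 0 t).measure_preimage hNm.nullMeasurableSet, hN0]
      simp [hsl]
    filter_upwards [measure_eq_zero_iff_ae_notMem.1 hEk] with p hp
    have h1 : ρ₀ (Φ k p) = ρt (Φ k p) := by
      by_contra hne
      exact hp (subset_toMeasurable _ _ hne)
    calc ρk k p = ρk k (p.1, p.2) := by rw [Prod.mk.eta]
      _ = ρ₀ (Xk k 0 p.1 p.2) := hρk k p.1 p.2
      _ = ρt (Φ k p) := h1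
  -- finite speed
  have hspeed : ∀ k t (x : Fin d → ℝ), ‖Φ k (t, x) - x‖ ≤ M * |t| := by
    intro k t x
    have h1 : ∀ u, HasDerivAt (fun u => Xk k u t x) (bk k (u, Xk k u t x)) u :=
      fun u => (hXk k).2 t x u
    have h2 := curve_speed h1 (fun u => hbkb k _) t 0
    rw [(hXk k).1 t x] at h2
    simpa using h2
  -- the tail function
  set R : ℝ := (n:ℝ) + M * n with hR
  set Bl : Set (Fin d → ℝ) := Metric.closedBall 0 R with hBl
  set Am : ℕ → Set (Fin d → ℝ) := fun m => Bl ∩ {y | (m:ℝ) < |ρt y|} with hAm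
  have hAmm : ∀ m, MeasurableSet (Am m) := fun m =>
    measurableSet_closedBall.inter (measurableSet_lt measurable_const hρtm.measurable.abs)
  set tail : ℕ → ℝ≥0∞ := fun m => ∫⁻ y in Am m, (‖ρt y‖₊ : ℝ≥0∞) ∂volume with htaildef
  have htail0 : Tendsto tail atTop (𝓝 0) := by
    set ν := (volume : Measure (Fin d → ℝ)).withDensity (fun y => (‖ρt y‖₊ : ℝ≥0∞)) with hν
    have hres : ∀ m, tail m = ν (Am m) := fun m => (withDensity_apply _ (hAmm m)).symm
    have hanti : Antitone Am := by
      intro m m' hmm' y hy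
      exact ⟨hy.1, lt_of_le_of_lt (show (m:ℝ) ≤ (m':ℝ) by exact_mod_cast hmm') hy.2⟩
    have hinter : ⋂ m, Am m = ∅ := by
      ext y
      simp only [mem_iInter, mem_empty_iff_false, iff_false, not_forall]
      obtain ⟨m, hm⟩ := exists_nat_gt |ρt y|
      exact ⟨m, fun hy => absurd hy.2 (not_lt.2 hm.le)⟩
    have hfin : ν (Am 0) ≠ ⊤ := by
      have h1 : ν (Am 0) ≤ ν Bl := measure_mono inter_subset_left
      have h2 : ν Bl = ∫⁻ y in Bl, (‖ρt y‖₊ : ℝ≥0∞) ∂volume :=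
        withDensity_apply _ measurableSet_closedBall
      have h3 : IntegrableOn ρ₀ Bl volume :=
        hρ₀.integrableOn_isCompact (isCompact_closedBall _ _)
      have h4 : ∫⁻ y in Bl, (‖ρt y‖₊ : ℝ≥0∞) ∂volume
          = ∫⁻ y in Bl, (‖ρ₀ y‖₊ : ℝ≥0∞) ∂volume :=
        lintegral_congr_ae (ae_restrict_of_ae (haeρ.mono fun y hy => by simp [hy]))
      refine ne_of_lt (lt_of_le_of_lt h1 ?_)
      rw [h2, h4]
      exact h3.2
    have h5 := tendsto_measure_iInter_atTop (fun m => (hAmm m).nullMeasurableSet) hanti ⟨0, hfin⟩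
    rw [hinter, measure_empty] at h5
    exact h5.congr fun m => (hres m).symm
  -- core estimate
  have hcore : ∀ ε > (0:ℝ), ∃ m : ℕ, ∀ k,
      ∫⁻ p in Q ∩ {p | (m:ℝ) < |Fk k p|}, (‖Fk k p‖₊ : ℝ≥0∞) ∂volume
        ≤ ENNReal.ofReal ε := by
    intro ε hε
    have hn1 : (0:ℝ) < ε / (n + 1) := by positivity
    have hev : ∀ᶠ m in atTop, tail m < ENNReal.ofReal (ε / (n+1)) :=
      htail0.eventually_lt_const (ENNReal.ofReal_pos.2 hn1)
    obtain ⟨m, hm⟩ := hev.exists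
    refine ⟨m, fun k => ?_⟩
    set A : Set (ℝ × (Fin d → ℝ)) := {p | (m:ℝ) < |Fk k p|} with hA
    have hAmeas : MeasurableSet A := measurableSet_lt measurable_const (hFkm k).abs
    set S := Q ∩ A with hS
    have hSm : MeasurableSet S := hQm.inter hAmeas
    set G : (Fin d → ℝ) → ℝ≥0∞ :=
      fun y => (Am m).indicator (fun y => (‖ρt y‖₊ : ℝ≥0∞)) y with hG
    have hGm : Measurable G :=
      (hρtm.measurable.nnnorm.coe_nnreal_ennreal).indicator (hAmm m)
    have hindm : Measurable fun p : ℝ × (Fin d → ℝ) =>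
        S.indicator (fun p => (‖Fk k p‖₊ : ℝ≥0∞)) p :=
      ((hFkm k).nnnorm.coe_nnreal_ennreal).indicator hSm
    calc ∫⁻ p in S, (‖Fk k p‖₊ : ℝ≥0∞) ∂volume
        = ∫⁻ p, S.indicator (fun p => (‖Fk k p‖₊ : ℝ≥0∞)) p ∂volume :=
          (lintegral_indicator hSm _).symm
      _ = ∫⁻ t, ∫⁻ x, S.indicator (fun p => (‖Fk k p‖₊ : ℝ≥0∞)) (t, x) ∂volume ∂volume := by
          rw [Measure.volume_eq_prod]
          exact lintegral_prod _ hindm.aemeasurable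
      _ ≤ ∫⁻ t, (Icc (0:ℝ) (n:ℝ)).indicator (fun _ => tail m) t ∂volume := by
          refine lintegral_mono fun t => ?_
          by_cases ht : t ∈ Icc (0:ℝ) (n:ℝ)
          · rw [indicator_of_mem ht]
            have hle : ∀ x, S.indicator (fun p => (‖Fk k p‖₊ : ℝ≥0∞)) (t, x)
                ≤ G (Xk k 0 t x) := by
              intro x
              by_cases hx : (t, x) ∈ S
              · rw [indicator_of_mem hx]
                obtain ⟨hxQ, hxA⟩ := hx
                have hxbox : x ∈ box := hxQ.2
                have hxn : ‖x‖ ≤ (n:ℝ) := by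
                  rw [pi_norm_le_iff_of_nonneg (by positivity)]
                  intro i
                  have hxi := hxbox i (mem_univ i)
                  rw [Real.norm_eq_abs, abs_le]
                  exact ⟨hxi.1, hxi.2⟩
                have hΦB : Xk k 0 t x ∈ Am m := by
                  constructor
                  · rw [hBl, Metric.mem_closedBall, dist_zero_right]
                    have h1 : ‖Φ k (t,x) - x‖ ≤ M * |t| := hspeed k t x
                    have h2 : |t| ≤ (n:ℝ) := by
                      rw [abs_of_nonneg ht.1]; exact ht.2
                    have h3 : ‖Xk k 0 t x‖ ≤ ‖Φ k (t,x) - x‖ + ‖x‖ := by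
                      have h4 : Xk k 0 t x = (Φ k (t,x) - x) + x := by
                        simp [hΦ]
                      rw [h4]
                      exact norm_add_le _ _
                    have h5 : M * |t| ≤ M * n := mul_le_mul_of_nonneg_left h2 hM0
                    rw [hR]
                    linarith
                  · exact hxA
                simp only [hG]
                rw [indicator_of_mem hΦB]
              · rw [indicator_of_notMem hx]
                exact zero_le
            calc ∫⁻ x, S.indicator (fun p => (‖Fk k p‖₊ : ℝ≥0∞)) (t, x) ∂volume
                ≤ ∫⁻ x, G (Xk k 0 t x) ∂volume := lintegral_mono hle
              _ = ∫⁻ y, G y ∂volume := (hmp k 0 t).lintegral_comp hGm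
              _ = tail m := by rw [hG, lintegral_indicator (hAmm m)]
          · rw [indicator_of_notMem ht]
            have hz : ∀ x, S.indicator (fun p => (‖Fk k p‖₊ : ℝ≥0∞)) (t, x) = 0 := by
              intro x
              refine indicator_of_notMem (fun hx => ht ?_) _
              exact hx.1.1
            simp [hz]
      _ = tail m * volume (Icc (0:ℝ) (n:ℝ)) := lintegral_indicator_const measurableSet_Icc _
      _ ≤ ENNReal.ofReal (ε / (n+1)) * ENNReal.ofReal ((n:ℝ) - 0) := by
          rw [Real.volume_Icc]
          exact mul_le_mul' hm.le (le_refl _)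
      _ ≤ ENNReal.ofReal ε := by
          rw [← ENNReal.ofReal_mul hn1.le]
          apply ENNReal.ofReal_le_ofReal
          rw [sub_zero, div_mul_eq_mul_div, div_le_iff₀ (by positivity)]
          nlinarith
  constructor
  · -- equi-integrability
    intro ε hε
    obtain ⟨m, hm⟩ := hcore ε hε
    refine ⟨(m:ℝ), fun k => ?_⟩
    have hAmeas : MeasurableSet {p : ℝ × (Fin d → ℝ) | (m:ℝ) < |Fk k p|} :=
      measurableSet_lt measurable_const (hFkm k).abs
    have hSm : MeasurableSet (Q ∩ {p | (m:ℝ) < |Fk k p|}) := hQm.inter hAmeas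
    have hSae : ((Q ∩ {p : ℝ × (Fin d → ℝ) | (m:ℝ) < |ρk k p|} : Set (ℝ × (Fin d → ℝ))))
        =ᵐ[(volume : Measure (ℝ × (Fin d → ℝ)))]
          ((Q ∩ {p | (m:ℝ) < |Fk k p|} : Set (ℝ × (Fin d → ℝ)))) := by
      refine Filter.eventuallyEq_set.2 ?_
      filter_upwards [hae2 k] with p hp
      simp only [mem_inter_iff, mem_setOf_eq, hp]
    calc ∫ p in Q ∩ {p : ℝ × (Fin d → ℝ) | (m:ℝ) < |ρk k p|}, |ρk k p| ∂volume
        = ∫ p in Q ∩ {p | (m:ℝ) < |Fk k p|}, |ρk k p| ∂volume := by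
          rw [Measure.restrict_congr_set hSae]
      _ = ∫ p in Q ∩ {p | (m:ℝ) < |Fk k p|}, |Fk k p| ∂volume :=
          integral_congr_ae (ae_restrict_of_ae ((hae2 k).mono fun p hp => by simp only [hp]))
      _ = (∫⁻ p in Q ∩ {p | (m:ℝ) < |Fk k p|}, ENNReal.ofReal |Fk k p| ∂volume).toReal :=
          integral_eq_lintegral_of_nonneg_ae (Eventually.of_forall fun p => abs_nonneg _)
            (hFkm k).abs.aestronglyMeasurable.restrict
      _ ≤ ε := by
          have h1 : ∫⁻ p in Q ∩ {p | (m:ℝ) < |Fk k p|}, ENNReal.ofReal |Fk k p| ∂volume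
              = ∫⁻ p in Q ∩ {p | (m:ℝ) < |Fk k p|}, (‖Fk k p‖₊ : ℝ≥0∞) ∂volume :=
            lintegral_congr fun p => (Real.enorm_eq_ofReal_abs _).symm
          rw [h1]
          refine le_trans (ENNReal.toReal_mono ENNReal.ofReal_ne_top (hm k)) ?_
          rw [ENNReal.toReal_ofReal hε.le]
  · -- weak sequential compactness
    intro σ hσ
    set μQ := (volume : Measure (ℝ × (Fin d → ℝ))).restrict Q with hμQ
    haveI : IsFiniteMeasure μQ :=
      ⟨by rw [hμQ, Measure.restrict_apply_univ]; exact hQc.measure_lt_top⟩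
    have hFkint : ∀ k, Integrable (Fk k) μQ := by
      intro k
      obtain ⟨m1, hm1⟩ := hcore 1 one_pos
      have hAmeas : MeasurableSet {p : ℝ × (Fin d → ℝ) | (m1:ℝ) < |Fk k p|} :=
        measurableSet_lt measurable_const (hFkm k).abs
      refine ⟨(hFkm k).aestronglyMeasurable.restrict, ?_⟩
      have hsplit : ∀ p, (‖Fk k p‖₊ : ℝ≥0∞)
          ≤ ({p : ℝ × (Fin d → ℝ) | (m1:ℝ) < |Fk k p|}).indicator
              (fun p => (‖Fk k p‖₊ : ℝ≥0∞)) p + ENNReal.ofReal m1 := by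
        intro p
        by_cases hp : p ∈ {p : ℝ × (Fin d → ℝ) | (m1:ℝ) < |Fk k p|}
        · rw [indicator_of_mem hp]; exact le_self_add
        · rw [indicator_of_notMem hp, zero_add, ← enorm_eq_nnnorm, Real.enorm_eq_ofReal_abs]
          exact ENNReal.ofReal_le_ofReal (not_lt.1 hp)
      show (∫⁻ p, (‖Fk k p‖₊ : ℝ≥0∞) ∂μQ) < ⊤
      calc ∫⁻ p, (‖Fk k p‖₊ : ℝ≥0∞) ∂μQ
          ≤ ∫⁻ p, (({p : ℝ × (Fin d → ℝ) | (m1:ℝ) < |Fk k p|}).indicator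
              (fun p => (‖Fk k p‖₊ : ℝ≥0∞)) p + ENNReal.ofReal m1) ∂μQ :=
            lintegral_mono hsplit
        _ = ∫⁻ p, ({p : ℝ × (Fin d → ℝ) | (m1:ℝ) < |Fk k p|}).indicator
              (fun p => (‖Fk k p‖₊ : ℝ≥0∞)) p ∂μQ + ENNReal.ofReal m1 * μQ univ := by
            rw [lintegral_add_right _ measurable_const, lintegral_const]
        _ < ⊤ := by
            refine ENNReal.add_lt_top.2 ⟨?_, ?_⟩
            · rw [lintegral_indicator hAmeas, hμQ, Measure.restrict_restrict hAmeas,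
                inter_comm]
              exact lt_of_le_of_lt (hm1 k) ENNReal.ofReal_lt_top
            · exact ENNReal.mul_lt_top ENNReal.ofReal_lt_top (measure_lt_top _ _)
    have hμae : ∀ k, ∀ᵐ p ∂μQ, ρk k p = Fk k p := fun k => ae_restrict_of_ae (hae2 k)
    have hρkint : ∀ j, Integrable (ρk (σ j)) μQ := fun j =>
      (hFkint (σ j)).congr ((hμae (σ j)).mono fun p hp => hp.symm)
    have hui : ∀ ε > (0:ℝ), ∃ m : ℕ, ∀ j, ∫ x, excess m (ρk (σ j) x) ∂μQ ≤ ε := by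
      intro ε hε
      obtain ⟨m, hm⟩ := hcore ε hε
      refine ⟨m, fun j => ?_⟩
      have hAmeas : MeasurableSet {p : ℝ × (Fin d → ℝ) | (m:ℝ) < |Fk (σ j) p|} :=
        measurableSet_lt measurable_const (hFkm (σ j)).abs
      have he1 : ∫ x, excess m (ρk (σ j) x) ∂μQ = ∫ x, excess m (Fk (σ j) x) ∂μQ :=
        integral_congr_ae ((hμae (σ j)).mono fun p hp => by simp only [hp])
      rw [he1, integral_eq_lintegral_of_nonneg_ae
        (Eventually.of_forall fun p => excess_nonneg _ _)
        ((measurable_excess m).comp (hFkm (σ j))).aestronglyMeasurable]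
      have hptw : ∀ p, ENNReal.ofReal (excess m (Fk (σ j) p))
          ≤ ({p : ℝ × (Fin d → ℝ) | (m:ℝ) < |Fk (σ j) p|}).indicator
              (fun p => (‖Fk (σ j) p‖₊ : ℝ≥0∞)) p := by
        intro p
        by_cases hp : p ∈ {p : ℝ × (Fin d → ℝ) | (m:ℝ) < |Fk (σ j) p|}
        · rw [indicator_of_mem hp, ← enorm_eq_nnnorm, Real.enorm_eq_ofReal_abs]
          refine le_of_eq ?_
          congr 1
          simp only [excess, if_pos (show (m:ℝ) < |Fk (σ j) p| from hp)]
        · rw [indicator_of_notMem hp]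
          simp only [excess, if_neg (show ¬ (m:ℝ) < |Fk (σ j) p| from hp),
            ENNReal.ofReal_zero, le_refl]
      have h2 : ∫⁻ p, ENNReal.ofReal (excess m (Fk (σ j) p)) ∂μQ ≤ ENNReal.ofReal ε := by
        refine le_trans (lintegral_mono hptw) ?_
        rw [lintegral_indicator hAmeas, hμQ, Measure.restrict_restrict hAmeas, inter_comm]
        exact hm (σ j)
      refine le_trans (ENNReal.toReal_mono ENNReal.ofReal_ne_top h2) ?_
      rw [ENNReal.toReal_ofReal hε.le]
    obtain ⟨τ, hτ, g, hg, hconv⟩ := dunford_pettis μQ (fun j => ρk (σ j))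
      (fun j => (hρkint j).1) hρkint hui
    exact ⟨τ, hτ, g, hg, fun h hmh hbd => hconv h hmh hbd⟩
end
end

section
/- Let (f^k)_{k∈ℕ} be functions on ℝ^d with f^k(x) ∈ {0,1} a.e., such that for every k and every dyadic square S of side length 2^{-k} in the grid 2^{-k}ℤ^d, the average of f^{k+1} over S equals 1/2. Then for every ρ̄ ∈ L^∞(ℝ^d), there exists a sequence (ρ̄^k) with ‖ρ̄^k‖_{L^∞} ≤ 2‖ρ̄‖_{L^∞}, ρ̄^k · f^{k+1} = ρ̄^k a.e., and ρ̄^k ⇀ ρ̄ weakly-star in L^∞(ℝ^d). Moreover if ρ̄ ≥ 0 the ρ̄^k can be chosen nonnegative. -/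
open MeasureTheory Real Set Filter Topology

noncomputable section

namespace Stmt12Aux

open MeasureTheory Real Set Filter Topology

lemma dyCube_eq_pi (d k : ℕ) (n : Fin d → ℤ) :
    dyCube d k n = Set.pi Set.univ fun i =>
      Ico ((n i : ℝ) * (2:ℝ) ^ (-(k:ℤ))) (((n i : ℝ) + 1) * (2:ℝ) ^ (-(k:ℤ))) := by
  ext x
  simp [dyCube, Set.mem_pi]

lemma measurableSet_dyCube (d k : ℕ) (n : Fin d → ℤ) : MeasurableSet (dyCube d k n) := by
  rw [dyCube_eq_pi]
  exact MeasurableSet.univ_pi fun i => measurableSet_Ico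

lemma volume_dyCube (d k : ℕ) (n : Fin d → ℤ) :
    volume (dyCube d k n) = ENNReal.ofReal ((2:ℝ) ^ (-(k:ℤ))) ^ d := by
  rw [dyCube_eq_pi, volume_pi_pi]
  have h : ∀ i : Fin d,
      volume (Ico ((n i : ℝ) * (2:ℝ) ^ (-(k:ℤ))) (((n i : ℝ) + 1) * (2:ℝ) ^ (-(k:ℤ))))
        = ENNReal.ofReal ((2:ℝ) ^ (-(k:ℤ))) := by
    intro i
    rw [Real.volume_Ico]
    congr 1
    ring
  simp only [h, Finset.prod_const, Finset.card_univ, Fintype.card_fin]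

lemma mem_dyCube_iff {d k : ℕ} {n : Fin d → ℤ} {x : Fin d → ℝ} :
    x ∈ dyCube d k n ↔ ∀ i, ⌊(2:ℝ) ^ k * x i⌋ = n i := by
  have hc : (0:ℝ) < (2:ℝ) ^ k := by positivity
  have h2 : (2:ℝ) ^ (-(k:ℤ)) = ((2:ℝ) ^ k)⁻¹ := by
    rw [zpow_neg, zpow_natCast]
  show (∀ i, _ ∧ _) ↔ _
  refine forall_congr' fun i => ?_
  rw [Int.floor_eq_iff, h2]
  constructor
  · rintro ⟨ha, hb⟩
    constructor
    · have := mul_le_mul_of_nonneg_right ha hc.le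
      rw [mul_assoc, inv_mul_cancel₀ hc.ne', mul_one] at this
      linarith [this, mul_comm ((2:ℝ)^k) (x i)]
    · have := mul_lt_mul_of_pos_right hb hc
      rw [mul_assoc, inv_mul_cancel₀ hc.ne', mul_one] at this
      push_cast
      linarith [this, mul_comm ((2:ℝ)^k) (x i)]
  · rintro ⟨ha, hb⟩
    constructor
    · have := mul_le_mul_of_nonneg_right ha (inv_nonneg.2 hc.le)
      rw [mul_comm ((2:ℝ)^k) (x i), mul_assoc, mul_inv_cancel₀ hc.ne', mul_one] at this
      exact this
    · have hb' : (2:ℝ)^k * x i < (n i : ℝ) + 1 := by push_cast at hb; linarith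
      have := mul_lt_mul_of_pos_right hb' (inv_pos.2 hc)
      rw [mul_comm ((2:ℝ)^k) (x i), mul_assoc, mul_inv_cancel₀ hc.ne', mul_one] at this
      exact this

lemma mem_dyCube_floor (d k : ℕ) (x : Fin d → ℝ) :
    x ∈ dyCube d k (fun i => ⌊(2:ℝ) ^ k * x i⌋) :=
  mem_dyCube_iff.2 fun _ => rfl

lemma pairwise_disjoint_dyCube (d k : ℕ) :
    Pairwise (Function.onFun Disjoint fun n : Fin d → ℤ => dyCube d k n) := by
  intro n n' hne
  rw [Function.onFun, Set.disjoint_left]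
  intro x hx hx'
  exact hne (funext fun i => ((mem_dyCube_iff.1 hx) i).symm.trans ((mem_dyCube_iff.1 hx') i))

lemma iUnion_dyCube (d k : ℕ) : ⋃ n : Fin d → ℤ, dyCube d k n = Set.univ :=
  Set.eq_univ_of_forall fun x => Set.mem_iUnion.2 ⟨_, mem_dyCube_floor d k x⟩

lemma dyCube_subset {d m k : ℕ} (hmk : m ≤ k) (n : Fin d → ℤ) :
    dyCube d k n ⊆ dyCube d m (fun i => n i / 2 ^ (k - m)) := by
  intro x hx i
  obtain ⟨h1, h2⟩ := hx i
  have hb : (0:ℤ) < 2 ^ (k - m) := by positivity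
  have hid : ((2:ℝ) ^ (k - m)) * (2:ℝ) ^ (-(k:ℤ)) = (2:ℝ) ^ (-(m:ℤ)) := by
    rw [← zpow_natCast (2:ℝ) (k - m), ← zpow_add₀ (by norm_num : (2:ℝ) ≠ 0)]
    congr 1
    push_cast [Nat.cast_sub hmk]
    ring
  have hpos : (0:ℝ) < (2:ℝ) ^ (-(k:ℤ)) := by positivity
  set q := n i / 2 ^ (k - m) with hq
  have hle : (q * 2 ^ (k - m) : ℤ) ≤ n i := Int.ediv_mul_le _ hb.ne'
  have hlt : (n i : ℤ) < (q + 1) * 2 ^ (k - m) := Int.lt_ediv_add_one_mul_self _ hb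
  constructor
  · have h3 : ((q : ℝ)) * (2:ℝ) ^ (-(m:ℤ)) ≤ (n i : ℝ) * (2:ℝ) ^ (-(k:ℤ)) := by
      rw [← hid, ← mul_assoc]
      apply mul_le_mul_of_nonneg_right _ hpos.le
      calc (q:ℝ) * (2:ℝ) ^ (k - m) = ((q * 2 ^ (k - m) : ℤ) : ℝ) := by push_cast; ring
        _ ≤ (n i : ℝ) := by exact_mod_cast hle
    exact h3.trans h1
  · have h3 : ((n i : ℝ) + 1) * (2:ℝ) ^ (-(k:ℤ)) ≤ ((q:ℝ) + 1) * (2:ℝ) ^ (-(m:ℤ)) := by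
      rw [← hid, ← mul_assoc]
      apply mul_le_mul_of_nonneg_right _ hpos.le
      calc (n i : ℝ) + 1 = ((n i + 1 : ℤ) : ℝ) := by push_cast; ring
        _ ≤ (((q + 1) * 2 ^ (k - m) : ℤ) : ℝ) := by exact_mod_cast hlt
        _ = ((q:ℝ) + 1) * (2:ℝ) ^ (k - m) := by push_cast; ring
    exact h2.trans_le h3

lemma integral_G_dyCube {d : ℕ} (f : (Fin d → ℝ) → ℝ) (hfm : Measurable f)
    (hf01 : ∀ᵐ x ∂(volume : Measure (Fin d → ℝ)), f x = 0 ∨ f x = 1)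
    (k : ℕ) (n : Fin d → ℤ)
    (havg : ∫ x in dyCube d k n, f x = ((2:ℝ) ^ (-(k:ℤ))) ^ d / 2) :
    ∫ x in dyCube d k n, (2 * f x - 1) = 0 := by
  have hvol : volume (dyCube d k n) ≠ ⊤ := by
    rw [volume_dyCube]
    exact (ENNReal.pow_lt_top ENNReal.ofReal_lt_top).ne
  have hc : IntegrableOn (fun _ : Fin d → ℝ => (1:ℝ)) (dyCube d k n) :=
    integrableOn_const hvol
  have hIf : IntegrableOn f (dyCube d k n) := by
    refine Integrable.mono' hc hfm.aestronglyMeasurable.restrict ?_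
    filter_upwards [ae_restrict_of_ae hf01] with x hx
    rcases hx with h | h <;> simp [h]
  have h1 : IntegrableOn (fun x => 2 * f x) (dyCube d k n) := hIf.const_mul 2
  rw [integral_sub h1 hc, integral_const_mul, havg, setIntegral_const]
  have hvr : (volume (dyCube d k n)).toReal = ((2:ℝ) ^ (-(k:ℤ))) ^ d := by
    rw [volume_dyCube, ENNReal.toReal_pow, ENNReal.toReal_ofReal (by positivity)]
  rw [measureReal_def, hvr, smul_eq_mul]
  ring

lemma integral_eq_tsum_dyCube {d : ℕ} {F : (Fin d → ℝ) → ℝ} (hF : Integrable F) (k : ℕ) :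
    ∫ x, F x = ∑' n : Fin d → ℤ, ∫ x in dyCube d k n, F x := by
  have h := MeasureTheory.integral_iUnion (μ := (volume : Measure (Fin d → ℝ)))
    (s := fun n : Fin d → ℤ => dyCube d k n) (f := F)
    (fun n => measurableSet_dyCube d k n) (pairwise_disjoint_dyCube d k)
    (by rw [iUnion_dyCube]; exact hF.integrableOn)
  rw [iUnion_dyCube, Measure.restrict_univ] at h
  exact h

lemma dyadic_approx {d : ℕ} (ψ : (Fin d → ℝ) → ℝ) (hψ : Integrable ψ) {ε : ℝ} (hε : 0 < ε) :
    ∃ (m : ℕ) (h : (Fin d → ℝ) → ℝ) (c : (Fin d → ℤ) → ℝ),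
      Integrable h ∧ (∀ (n : Fin d → ℤ) (x : Fin d → ℝ), x ∈ dyCube d m n → h x = c n) ∧
      (∫ x, |ψ x - h x|) < ε := by
  obtain ⟨g, hgsupp, hgapp, hgcont, hgint⟩ :=
    hψ.exists_hasCompactSupport_integral_sub_le (show (0:ℝ) < ε/4 by linarith)
  have hgu : UniformContinuous g :=
    hgcont.uniformContinuous_of_tendsto_cocompact hgsupp.is_zero_at_infty
  set K := Metric.cthickening 1 (tsupport g) with hKdef
  have hKc : IsCompact K := hgsupp.cthickening
  have hKmeas : MeasurableSet K := Metric.isClosed_cthickening.measurableSet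
  have hKvol : volume K < ⊤ := hKc.measure_lt_top
  set T := (volume K).toReal with hTdef
  have hT0 : 0 ≤ T := ENNReal.toReal_nonneg
  set ε' := ε / (4 * (T + 1)) with hε'def
  have hε' : 0 < ε' := by positivity
  obtain ⟨δ, hδ0, hδ⟩ := Metric.uniformContinuous_iff.1 hgu ε' hε'
  -- choose m with 2^{-m} < min δ 1
  obtain ⟨m, hm⟩ : ∃ m : ℕ, ((2:ℝ)⁻¹) ^ m < min δ 1 :=
    exists_pow_lt_of_lt_one (lt_min hδ0 one_pos) (by norm_num)
  have h2m : (2:ℝ) ^ (-(m:ℤ)) = ((2:ℝ)⁻¹) ^ m := by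
    rw [zpow_neg, zpow_natCast, inv_pow]
  have hmδ : (2:ℝ) ^ (-(m:ℤ)) < δ := by rw [h2m]; exact hm.trans_le (min_le_left _ _)
  have hm1 : (2:ℝ) ^ (-(m:ℤ)) ≤ 1 := by rw [h2m]; exact (hm.trans_le (min_le_right _ _)).le
  have h2mpos : (0:ℝ) < (2:ℝ) ^ (-(m:ℤ)) := by positivity
  set corner : (Fin d → ℝ) → (Fin d → ℝ) :=
    fun x i => ((⌊(2:ℝ) ^ m * x i⌋ : ℤ) : ℝ) * (2:ℝ) ^ (-(m:ℤ)) with hcorner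
  have hdistc : ∀ x : Fin d → ℝ, dist (corner x) x ≤ (2:ℝ) ^ (-(m:ℤ)) := by
    intro x
    rw [dist_pi_le_iff h2mpos.le]
    intro i
    have hx := (mem_dyCube_floor d m x) i
    simp only [hcorner]
    rw [Real.dist_eq, abs_le]
    constructor
    · push_cast at hx ⊢
      nlinarith [hx.1, hx.2]
    · push_cast at hx ⊢
      nlinarith [hx.1, hx.2]
  set h : (Fin d → ℝ) → ℝ := fun x => g (corner x) with hhdef
  have hcornmeas : Measurable corner := by
    apply measurable_pi_lambda
    intro i
    have hm1' : Measurable fun x : Fin d → ℝ => ⌊(2:ℝ) ^ m * x i⌋ :=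
      Measurable.floor ((measurable_pi_apply i).const_mul _)
    exact (measurable_from_top.comp hm1').mul_const _
  have hhmeas : Measurable h := hgcont.measurable.comp hcornmeas
  -- pointwise bound
  have hbound : ∀ x, |g x - h x| ≤ K.indicator (fun _ => ε') x := by
    intro x
    by_cases hxK : x ∈ K
    · rw [Set.indicator_of_mem hxK]
      have : dist (g x) (g (corner x)) < ε' := by
        apply hδ
        rw [dist_comm]
        exact (hdistc x).trans_lt hmδ
      rw [Real.dist_eq] at this
      exact this.le
    · rw [Set.indicator_of_notMem hxK]
      have hgx : g x = 0 := by
        apply image_eq_zero_of_notMem_tsupport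
        intro hmem
        exact hxK (Metric.self_subset_cthickening _ hmem)
      have hgc : g (corner x) = 0 := by
        apply image_eq_zero_of_notMem_tsupport
        intro hmem
        apply hxK
        exact Metric.mem_cthickening_of_dist_le x (corner x) 1 _ hmem
          ((dist_comm x (corner x) ▸ (hdistc x)).trans hm1)
      simp [hhdef, hgx, hgc]
  have hindint : Integrable (K.indicator fun _ => ε') (volume : Measure (Fin d → ℝ)) :=
    (integrable_indicator_iff hKmeas).2 (integrableOn_const hKvol.ne)
  have hghint : Integrable (fun x => g x - h x) := by
    refine Integrable.mono' hindint
      (hgcont.measurable.sub hhmeas).aestronglyMeasurable ?_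
    exact Eventually.of_forall fun x => by
      rw [Real.norm_eq_abs]; exact hbound x
  have hhint : Integrable h := by
    have h' := hgint.sub hghint
    refine h'.congr (Eventually.of_forall fun x => ?_)
    simp only [Pi.sub_apply]
    ring
  refine ⟨m, h, fun n => g (fun i => (n i : ℝ) * (2:ℝ) ^ (-(m:ℤ))), hhint, ?_, ?_⟩
  · intro n x hx
    have : corner x = fun i => (n i : ℝ) * (2:ℝ) ^ (-(m:ℤ)) := by
      funext i
      rw [hcorner]
      simp only []
      rw [(mem_dyCube_iff.1 hx) i]
    rw [hhdef]
    simp only []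
    rw [this]
  · -- ∫ |ψ - h| ≤ ∫|ψ-g| + ∫|g-h| ≤ ε/4 + ε' * T < ε
    have hint1 : Integrable (fun x => |ψ x - g x|) := (hψ.sub hgint).abs
    have hint2 : Integrable (fun x => |g x - h x|) := hghint.abs
    have step1 : (∫ x, |ψ x - h x|) ≤ (∫ x, |ψ x - g x|) + ∫ x, |g x - h x| := by
      rw [← integral_add hint1 hint2]
      apply integral_mono (hψ.sub hhint).abs (hint1.add hint2)
      intro x
      exact abs_sub_le _ _ _
    have step2 : (∫ x, |g x - h x|) ≤ ε' * T := by
      have : (∫ x, |g x - h x|) ≤ ∫ x, K.indicator (fun _ => ε') x :=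
        integral_mono hint2 hindint (fun x => hbound x)
      rwa [integral_indicator_const _ hKmeas, smul_eq_mul, mul_comm] at this
    have step3 : ε' * T ≤ ε / 4 := by
      have h1 : ε' * T ≤ ε' * (T + 1) := by nlinarith
      have h2 : ε' * (T + 1) = ε / 4 := by
        rw [hε'def]
        field_simp
      linarith
    have step4 : (∫ x, |ψ x - g x|) ≤ ε / 4 := by
      have : ∀ x, |ψ x - g x| = ‖ψ x - g x‖ := fun x => (Real.norm_eq_abs _).symm
      simp only [this]
      exact hgapp
    linarith

lemma key_tendsto {d : ℕ} (f : ℕ → (Fin d → ℝ) → ℝ) (hfm : ∀ k, Measurable (f k))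
    (hf01 : ∀ k, ∀ᵐ x ∂(volume : Measure (Fin d → ℝ)), f k x = 0 ∨ f k x = 1)
    (havg : ∀ (k : ℕ) (n : Fin d → ℤ),
      ∫ x in dyCube d k n, f (k+1) x = ((2:ℝ) ^ (-(k:ℤ))) ^ d / 2)
    (ψ : (Fin d → ℝ) → ℝ) (hψ : Integrable ψ) :
    Tendsto (fun k => ∫ x, (2 * f (k+1) x - 1) * ψ x) atTop (𝓝 0) := by
  have hGb : ∀ k, ∀ᵐ x ∂(volume : Measure (Fin d → ℝ)), ‖2 * f (k+1) x - 1‖ ≤ 1 := by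
    intro k
    filter_upwards [hf01 (k+1)] with x hx
    rcases hx with h | h <;> simp [h] <;> norm_num
  have hGm : ∀ k, AEStronglyMeasurable (fun x => 2 * f (k+1) x - 1)
      (volume : Measure (Fin d → ℝ)) :=
    fun k => (((hfm (k+1)).const_mul 2).sub measurable_const).aestronglyMeasurable
  rw [Metric.tendsto_atTop]
  intro ε hε
  obtain ⟨m, h, c, hhi, hconst, happ⟩ := dyadic_approx ψ hψ hε
  refine ⟨m, fun k hk => ?_⟩
  have hconstk : ∀ n : Fin d → ℤ, ∀ x ∈ dyCube d k n,
      h x = c (fun i => n i / 2 ^ (k - m)) :=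
    fun n x hx => hconst _ _ (dyCube_subset hk n hx)
  have hGh_int : Integrable (fun x => (2 * f (k+1) x - 1) * h x) :=
    hhi.bdd_mul (hGm k) (hGb k)
  have hGh : ∫ x, (2 * f (k+1) x - 1) * h x = 0 := by
    rw [integral_eq_tsum_dyCube hGh_int k]
    have hz : ∀ n : Fin d → ℤ, ∫ x in dyCube d k n, (2 * f (k+1) x - 1) * h x = 0 := by
      intro n
      have hcg : ∫ x in dyCube d k n, (2 * f (k+1) x - 1) * h x
          = ∫ x in dyCube d k n, (2 * f (k+1) x - 1) * c (fun i => n i / 2 ^ (k - m)) := by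
        apply setIntegral_congr_fun (measurableSet_dyCube d k n)
        intro x hx
        dsimp only
        rw [hconstk n x hx]
      rw [hcg, integral_mul_const,
        integral_G_dyCube (f (k+1)) (hfm (k+1)) (hf01 (k+1)) k n (havg k n), zero_mul]
    simp [hz]
  have hψh : Integrable (fun x => ψ x - h x) := hψ.sub hhi
  have hGψh_int : Integrable (fun x => (2 * f (k+1) x - 1) * (ψ x - h x)) :=
    hψh.bdd_mul (hGm k) (hGb k)
  have hsplit : ∫ x, (2 * f (k+1) x - 1) * ψ x
      = (∫ x, (2 * f (k+1) x - 1) * (ψ x - h x)) + ∫ x, (2 * f (k+1) x - 1) * h x := by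
    rw [← integral_add hGψh_int hGh_int]
    congr 1
    funext x
    ring
  rw [dist_zero_right, Real.norm_eq_abs]
  have hb : |∫ x, (2 * f (k+1) x - 1) * ψ x| ≤ ∫ x, |ψ x - h x| := by
    rw [hsplit, hGh, add_zero]
    have habs : Integrable (fun x => |2 * f (k+1) x - 1| * |ψ x - h x|)
        (volume : Measure (Fin d → ℝ)) :=
      hGψh_int.abs.congr (Eventually.of_forall fun x => abs_mul _ _)
    calc |∫ x, (2 * f (k+1) x - 1) * (ψ x - h x)|
        ≤ ∫ x, |2 * f (k+1) x - 1| * |ψ x - h x| := by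
          simpa [Real.norm_eq_abs] using norm_integral_le_integral_norm
            (μ := (volume : Measure (Fin d → ℝ)))
            (f := fun x => (2 * f (k+1) x - 1) * (ψ x - h x))
      _ ≤ ∫ x, |ψ x - h x| := by
          apply integral_mono_ae habs hψh.abs
          filter_upwards [hGb k] with x hx
          exact mul_le_of_le_one_left (abs_nonneg _) (by rwa [Real.norm_eq_abs] at hx)
  exact lt_of_le_of_lt hb happ

end Stmt12Aux


/-- given indicator-like functions `fᵏ ∈ {0,1}` whose averages over each
dyadic cube of side `2^{-k}` (at the next generation) equal `1/2`, every `ρ₀ ∈ L^∞` is the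
weak-star limit of a sequence `ρ₀ᵏ` with `‖ρ₀ᵏ‖_∞ ≤ 2‖ρ₀‖_∞` supported on `{f^{k+1}=1}`;
moreover the `ρ₀ᵏ` can be chosen nonnegative if `ρ₀` is. -/
theorem stmt12 {d : ℕ} (f : ℕ → (Fin d → ℝ) → ℝ) (hfm : ∀ k, Measurable (f k))
    (hf01 : ∀ k, ∀ᵐ x ∂(volume : Measure (Fin d → ℝ)), f k x = 0 ∨ f k x = 1)
    (havg : ∀ (k : ℕ) (n : Fin d → ℤ),
      ∫ x in dyCube d k n, f (k+1) x = ((2:ℝ) ^ (-(k:ℤ))) ^ d / 2)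
    (ρ₀ : (Fin d → ℝ) → ℝ) (hρ₀ : MemLp ρ₀ ⊤ (volume : Measure (Fin d → ℝ))) :
    ∃ ρs : ℕ → (Fin d → ℝ) → ℝ,
      (∀ k, MemLp (ρs k) ⊤ (volume : Measure (Fin d → ℝ))) ∧
      (∀ k, eLpNorm (ρs k) ⊤ (volume : Measure (Fin d → ℝ))
        ≤ 2 * eLpNorm ρ₀ ⊤ (volume : Measure (Fin d → ℝ))) ∧
      (∀ k, ∀ᵐ x ∂(volume : Measure (Fin d → ℝ)), ρs k x * f (k+1) x = ρs k x) ∧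
      (∀ φ : (Fin d → ℝ) → ℝ, Integrable φ →
        Tendsto (fun k => ∫ x, ρs k x * φ x) atTop (𝓝 (∫ x, ρ₀ x * φ x))) ∧
      ((∀ᵐ x ∂(volume : Measure (Fin d → ℝ)), 0 ≤ ρ₀ x) →
        ∀ k, ∀ᵐ x ∂(volume : Measure (Fin d → ℝ)), 0 ≤ ρs k x) := by
  classical
  obtain ⟨M, hM0, hM⟩ : ∃ M : ℝ, 0 ≤ M ∧
      ∀ᵐ x ∂(volume : Measure (Fin d → ℝ)), ‖ρ₀ x‖ ≤ M := by
    refine ⟨max (eLpNorm ρ₀ ⊤ (volume : Measure (Fin d → ℝ))).toReal 0, le_max_right _ _, ?_⟩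
    have hlt : eLpNormEssSup ρ₀ (volume : Measure (Fin d → ℝ)) < ⊤ := by
      have h2 := hρ₀.2
      rwa [eLpNorm_exponent_top] at h2
    filter_upwards [ae_le_eLpNormEssSup (f := ρ₀) (μ := (volume : Measure (Fin d → ℝ)))]
      with x hx
    have h3 := ENNReal.toReal_mono hlt.ne hx
    have h4 : ‖ρ₀ x‖ ≤ (eLpNormEssSup ρ₀ (volume : Measure (Fin d → ℝ))).toReal := by
      simpa using h3
    rw [eLpNorm_exponent_top]
    exact le_max_of_le_left h4
  have hGb : ∀ k, ∀ᵐ x ∂(volume : Measure (Fin d → ℝ)), ‖2 * f (k+1) x - 1‖ ≤ 1 := by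
    intro k
    filter_upwards [hf01 (k+1)] with x hx
    rcases hx with h | h <;> simp [h] <;> norm_num
  have hGm : ∀ k, AEStronglyMeasurable (fun x => 2 * f (k+1) x - 1)
      (volume : Measure (Fin d → ℝ)) :=
    fun k => (((hfm (k+1)).const_mul 2).sub measurable_const).aestronglyMeasurable
  refine ⟨fun k x => 2 * ρ₀ x * f (k+1) x, ?_, ?_, ?_, ?_, ?_⟩
  · intro k
    refine memLp_top_of_bound ?_ (2 * M) ?_
    · exact (hρ₀.aestronglyMeasurable.const_mul 2).mul (hfm (k+1)).aestronglyMeasurable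
    filter_upwards [hM, hf01 (k+1)] with x h1 h2
    rcases h2 with h | h <;> simp only [h, mul_zero, mul_one, norm_zero, Real.norm_eq_abs,
      abs_mul, abs_two]
    · linarith
    · rw [Real.norm_eq_abs] at h1
      nlinarith [abs_nonneg (ρ₀ x)]
  · intro k
    have h1 : eLpNorm (fun x => 2 * ρ₀ x * f (k+1) x) ⊤ (volume : Measure (Fin d → ℝ))
        ≤ eLpNorm (fun x => (2:ℝ) * ρ₀ x) ⊤ (volume : Measure (Fin d → ℝ)) := by
      apply eLpNorm_mono_ae
      filter_upwards [hf01 (k+1)] with x hx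
      rcases hx with h | h <;> simp [h, norm_nonneg]
    have h2 : eLpNorm (fun x => (2:ℝ) * ρ₀ x) ⊤ (volume : Measure (Fin d → ℝ))
        = 2 * eLpNorm ρ₀ ⊤ (volume : Measure (Fin d → ℝ)) := by
      have he : (fun x => (2:ℝ) * ρ₀ x) = (2:ℝ) • ρ₀ := by
        funext x
        simp [smul_eq_mul]
      rw [he, eLpNorm_const_smul]
      congr 1
      simp [enorm_eq_nnnorm, Real.nnnorm_two]
    exact h1.trans_eq h2
  · intro k
    filter_upwards [hf01 (k+1)] with x hx
    rcases hx with h | h <;> simp [h]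
  · intro φ hφ
    have hψ : Integrable (fun x => ρ₀ x * φ x) := hφ.bdd_mul hρ₀.aestronglyMeasurable hM
    have hkey := Stmt12Aux.key_tendsto f hfm hf01 havg _ hψ
    have heq : ∀ k, ∫ x, 2 * ρ₀ x * f (k+1) x * φ x
        = (∫ x, (2 * f (k+1) x - 1) * (ρ₀ x * φ x)) + ∫ x, ρ₀ x * φ x := by
      intro k
      rw [← integral_add (hψ.bdd_mul (hGm k) (hGb k)) hψ]
      congr 1
      funext x
      ring
    have hlim := hkey.add_const (∫ x, ρ₀ x * φ x)
    rw [zero_add] at hlim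
    exact hlim.congr fun k => (heq k).symm
  · intro hpos k
    filter_upwards [hpos, hf01 (k+1)] with x h1 h2
    rcases h2 with h | h <;> simp [h] <;> linarith
end
end

section
/- Let (f^k) satisfy f^k ∈ {0,1} a.e. and, for every dyadic square S of side 2^{-k}, ⨍_S f^{k+1} = 1/2. Define ρ̄^k(x) := 2 f^{k+1}(x) Σ_{S} 1_S(x) ⨍_S ρ̄ dy, summing over squares S of side 2^{-k}. Then for every l ≤ k and every square S̃ of side 2^{-l} in the grid 2^{-l}ℤ^d, ∫_{S̃} ρ̄^k(x) dx = ∫_{S̃} ρ̄(x) dx. -/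
open MeasureTheory Real Set Filter Topology

noncomputable section

/-- The dyadic cube as a product of half-open intervals. -/
lemma dyCube_eq_pi (d k : ℕ) (n : Fin d → ℤ) :
    dyCube d k n = Set.univ.pi fun i =>
      Ico ((n i : ℝ) * (2:ℝ) ^ (-(k:ℤ))) (((n i : ℝ) + 1) * (2:ℝ) ^ (-(k:ℤ))) := by
  ext x
  simp [dyCube, Set.mem_pi, Set.mem_Ico]

lemma dyCube_measurableSet (d k : ℕ) (n : Fin d → ℤ) : MeasurableSet (dyCube d k n) := by
  rw [dyCube_eq_pi]
  exact MeasurableSet.univ_pi fun i => measurableSet_Ico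

lemma dyCube_volume_lt_top (d k : ℕ) (n : Fin d → ℤ) : volume (dyCube d k n) < ⊤ := by
  rw [dyCube_eq_pi, volume_pi_pi]
  refine ENNReal.prod_lt_top fun i _ => ?_
  rw [Real.volume_Ico]
  exact ENNReal.ofReal_lt_top

lemma dyCube_isFiniteMeasure (d k : ℕ) (n : Fin d → ℤ) :
    IsFiniteMeasure ((volume : Measure (Fin d → ℝ)).restrict (dyCube d k n)) := by
  constructor
  rw [Measure.restrict_apply_univ]
  exact dyCube_volume_lt_top d k n

/-- On the dyadic cube indexed by `m`, the floors recover `m`. -/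
lemma dyCube_floor {d k : ℕ} {m : Fin d → ℤ} {x : Fin d → ℝ} (hx : x ∈ dyCube d k m)
    (i : Fin d) : ⌊x i * (2:ℝ) ^ k⌋ = m i := by
  obtain ⟨h1, h2⟩ := hx i
  have hpow : (0:ℝ) < (2:ℝ) ^ k := by positivity
  have hz : (2:ℝ) ^ (-(k:ℤ)) = ((2:ℝ) ^ k)⁻¹ := by
    rw [zpow_neg, zpow_natCast]
  rw [hz] at h1 h2
  refine Int.floor_eq_iff.mpr ⟨?_, ?_⟩
  · have h := mul_le_mul_of_nonneg_right h1 hpow.le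
    rwa [mul_assoc, inv_mul_cancel₀ hpow.ne', mul_one] at h
  · have h := mul_lt_mul_of_pos_right h2 hpow
    rwa [mul_assoc, inv_mul_cancel₀ hpow.ne', mul_one] at h

lemma dyCube_disjoint {d k : ℕ} {m m' : Fin d → ℤ} (h : m ≠ m') :
    Disjoint (dyCube d k m) (dyCube d k m') := by
  rw [Set.disjoint_left]
  intro x hx hx'
  apply h
  funext i
  rw [← dyCube_floor hx i, ← dyCube_floor hx' i]

/-- Every point lies in the dyadic cube given by the floors of its coordinates. -/
lemma mem_dyCube_floor (d k : ℕ) (x : Fin d → ℝ) :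
    x ∈ dyCube d k (fun i => ⌊x i * (2:ℝ) ^ k⌋) := by
  intro i
  have hpow : (0:ℝ) < (2:ℝ) ^ k := by positivity
  have hz : (2:ℝ) ^ (-(k:ℤ)) = ((2:ℝ) ^ k)⁻¹ := by rw [zpow_neg, zpow_natCast]
  have h := Int.floor_le (x i * (2:ℝ) ^ k)
  have h' := Int.lt_floor_add_one (x i * (2:ℝ) ^ k)
  constructor
  · rw [hz, ← div_eq_mul_inv]
    exact (div_le_iff₀ hpow).mpr h
  · rw [hz, ← div_eq_mul_inv]
    exact (lt_div_iff₀ hpow).mpr (by push_cast; linarith)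

/-- Decomposition of a cube of side `2^{-l}` into cubes of side `2^{-k}`, `l ≤ k`. -/
lemma dyCube_decomp {d l k : ℕ} (hl : l ≤ k) (n : Fin d → ℤ) :
    dyCube d l n = ⋃ m ∈ (Fintype.piFinset fun i =>
      Finset.Ico (n i * 2 ^ (k - l)) ((n i + 1) * 2 ^ (k - l))),
      dyCube d k m := by
  have hpowR : (2:ℝ) ^ (k - l : ℕ) * (2:ℝ) ^ (-(k:ℤ)) = (2:ℝ) ^ (-(l:ℤ)) := by
    rw [← zpow_natCast (2:ℝ) (k - l), ← zpow_add₀ (two_ne_zero)]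
    congr 1
    push_cast [Nat.cast_sub hl]
    ring
  have hpow2 : (2:ℝ) ^ (-(l:ℤ)) * (2:ℝ) ^ (k:ℕ) = (2:ℝ) ^ (k - l : ℕ) := by
    rw [← zpow_natCast (2:ℝ) k, ← zpow_natCast (2:ℝ) (k-l), ← zpow_add₀ (two_ne_zero)]
    congr 1
    push_cast [Nat.cast_sub hl]
    ring
  have hpowk : (0:ℝ) < (2:ℝ) ^ k := by positivity
  ext x
  simp only [Set.mem_iUnion, Fintype.mem_piFinset, Finset.mem_Ico, exists_prop]
  constructor
  · intro hx
    refine ⟨fun i => ⌊x i * (2:ℝ) ^ k⌋, fun i => ?_, mem_dyCube_floor d k x⟩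
    obtain ⟨h1, h2⟩ := hx i
    constructor
    · apply Int.le_floor.mpr
      push_cast
      calc ((n i : ℝ)) * (2:ℝ) ^ (k - l : ℕ)
          = (n i : ℝ) * (2:ℝ) ^ (-(l:ℤ)) * (2:ℝ) ^ (k:ℕ) := by rw [mul_assoc, hpow2]
        _ ≤ x i * (2:ℝ) ^ (k:ℕ) := mul_le_mul_of_nonneg_right h1 hpowk.le
    · apply Int.floor_lt.mpr
      push_cast
      calc x i * (2:ℝ) ^ (k:ℕ)
          < ((n i : ℝ) + 1) * (2:ℝ) ^ (-(l:ℤ)) * (2:ℝ) ^ (k:ℕ) :=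
            mul_lt_mul_of_pos_right h2 hpowk
        _ = ((n i : ℝ) + 1) * (2:ℝ) ^ (k - l : ℕ) := by rw [mul_assoc, hpow2]
  · rintro ⟨m, hm, hxm⟩
    intro i
    obtain ⟨hm1, hm2⟩ := hm i
    obtain ⟨h1, h2⟩ := hxm i
    constructor
    · calc (n i : ℝ) * (2:ℝ) ^ (-(l:ℤ))
          = (n i : ℝ) * (2:ℝ) ^ (k - l : ℕ) * (2:ℝ) ^ (-(k:ℤ)) := by rw [mul_assoc, hpowR]
        _ ≤ (m i : ℝ) * (2:ℝ) ^ (-(k:ℤ)) := by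
            refine mul_le_mul_of_nonneg_right ?_ (by positivity)
            exact_mod_cast hm1
        _ ≤ x i := h1
    · calc x i < ((m i : ℝ) + 1) * (2:ℝ) ^ (-(k:ℤ)) := h2
        _ ≤ ((n i : ℝ) + 1) * (2:ℝ) ^ (k - l : ℕ) * (2:ℝ) ^ (-(k:ℤ)) := by
            refine mul_le_mul_of_nonneg_right ?_ (by positivity)
            exact_mod_cast hm2
        _ = ((n i : ℝ) + 1) * (2:ℝ) ^ (-(l:ℤ)) := by rw [mul_assoc, hpowR]

/-- the localised approximation
`ρ₀ᵏ(x) = 2 f^{k+1}(x) Σ_S 1_S(x) ⨍_S ρ₀` has the same integral as `ρ₀` on every dyadic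
cube of side `2^{-l}`, `l ≤ k`. -/
theorem stmt13 {d : ℕ} (f : ℕ → (Fin d → ℝ) → ℝ) (hfm : ∀ k, Measurable (f k))
    (hf01 : ∀ k, ∀ᵐ x ∂(volume : Measure (Fin d → ℝ)), f k x = 0 ∨ f k x = 1)
    (k : ℕ)
    (havg : ∀ n : Fin d → ℤ,
      ∫ x in dyCube d k n, f (k+1) x = ((2:ℝ) ^ (-(k:ℤ))) ^ d / 2)
    (ρ₀ : (Fin d → ℝ) → ℝ) (hρ₀ : MemLp ρ₀ ⊤ (volume : Measure (Fin d → ℝ)))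
    (ρs : (Fin d → ℝ) → ℝ)
    (hρs : ∀ x, ρs x = 2 * f (k+1) x *
      ((2:ℝ) ^ (k * d) * ∫ y in dyCube d k (fun i => ⌊x i * (2:ℝ) ^ k⌋), ρ₀ y)) :
    ∀ l ≤ k, ∀ n : Fin d → ℤ,
      ∫ x in dyCube d l n, ρs x = ∫ x in dyCube d l n, ρ₀ x := by
  intro l hl n
  have hint_ρ₀ : ∀ m : Fin d → ℤ, IntegrableOn ρ₀ (dyCube d k m) := by
    intro m
    haveI := dyCube_isFiniteMeasure d k m
    exact memLp_one_iff_integrable.mp ((hρ₀.restrict _).mono_exponent le_top)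
  have hint_f : ∀ m : Fin d → ℤ, IntegrableOn (f (k+1)) (dyCube d k m) := by
    intro m
    haveI := dyCube_isFiniteMeasure d k m
    refine Integrable.mono' (integrable_const 1) (hfm (k+1)).aestronglyMeasurable ?_
    filter_upwards [ae_restrict_of_ae (hf01 (k+1))] with x hx
    rcases hx with h | h <;> simp [h]
  have heq : ∀ m : Fin d → ℤ, Set.EqOn ρs
      (fun x => (2 * ((2:ℝ) ^ (k * d) * ∫ y in dyCube d k m, ρ₀ y)) * f (k+1) x)
      (dyCube d k m) := by
    intro m x hx
    have hm : (fun i => ⌊x i * (2:ℝ) ^ k⌋) = m := funext fun i => dyCube_floor hx i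
    simp only
    rw [hρs x, hm]
    ring
  have hint_ρs : ∀ m : Fin d → ℤ, IntegrableOn ρs (dyCube d k m) := by
    intro m
    exact IntegrableOn.congr_fun ((hint_f m).const_mul _)
      (fun x hx => ((heq m) hx).symm) (dyCube_measurableSet d k m)
  have key : ∀ m : Fin d → ℤ, ∫ x in dyCube d k m, ρs x = ∫ x in dyCube d k m, ρ₀ x := by
    intro m
    rw [setIntegral_congr_fun (dyCube_measurableSet d k m) (heq m), integral_const_mul, havg m]
    have hone : (2:ℝ) ^ (k * d) * ((2:ℝ) ^ (-(k:ℤ))) ^ d = 1 := by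
      rw [← zpow_natCast (2:ℝ) (k*d), ← zpow_natCast ((2:ℝ) ^ (-(k:ℤ))) d, ← zpow_mul,
        ← zpow_add₀ (two_ne_zero)]
      have hz : ((k*d : ℕ) : ℤ) + (-(k:ℤ)) * (d:ℤ) = 0 := by push_cast; ring
      rw [hz, zpow_zero]
    calc 2 * ((2:ℝ) ^ (k * d) * ∫ y in dyCube d k m, ρ₀ y) * (((2:ℝ) ^ (-(k:ℤ))) ^ d / 2)
        = ((2:ℝ) ^ (k * d) * ((2:ℝ) ^ (-(k:ℤ))) ^ d) * ∫ y in dyCube d k m, ρ₀ y := by ring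
      _ = ∫ y in dyCube d k m, ρ₀ y := by rw [hone, one_mul]
  rw [dyCube_decomp hl n,
    integral_biUnion_finset _ (fun m _ => dyCube_measurableSet d k m)
      (fun m _ m' _ hne => dyCube_disjoint hne) (fun m _ => hint_ρs m),
    integral_biUnion_finset _ (fun m _ => dyCube_measurableSet d k m)
      (fun m _ m' _ hne => dyCube_disjoint hne) (fun m _ => hint_ρ₀ m)]
  exact Finset.sum_congr rfl fun m _ => key m
end
end
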